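/- arXiv:2301.03156 — 12 statements merged into one kernel-verified Lean document; each statement's English description precedes it below -/
import Mathlib

section
/- Let G be a nonempty finite abstract simplicial complex. The star topology on G is a connected topological space if and only if the comparability graph of G — the simple graph on vertex set G in which distinct x, y ∈ G are adjacent if and only if x ⊆ y or y ⊆ x — is a connected graph. -/
variable {V : Type*} [DecidableEq V]

/-- The star `U(x)` of a simplex `x` inside the simplicial complex `G`. -/
def simplexStar (G : Finset (Finset V)) (x : Finset V) :
    Set {y : Finset V // y ∈ G} :=
  {y | x ⊆ y.1}

/-- The star topology on a finite abstract simplicial complex. -/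
def starTopology (G : Finset (Finset V)) :
    TopologicalSpace {y : Finset V // y ∈ G} :=
  TopologicalSpace.generateFrom {s | ∃ x ∈ G, s = simplexStar G x}

/-- The comparability graph of a simplicial complex: distinct simplices are
adjacent iff one is contained in the other. -/
def compGraph (G : Finset (Finset V)) : SimpleGraph {y : Finset V // y ∈ G} where
  Adj a b := a ≠ b ∧ (a.1 ⊆ b.1 ∨ b.1 ⊆ a.1)
  symm := ⟨fun a b h => ⟨h.1.symm, h.2.symm⟩⟩
  loopless := ⟨fun a h => h.1 rfl⟩

/-
The star `U(x)` is the principal up-set of `x` for inclusion, so the star topology is the upper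
set (Alexandrov) topology of the poset `G`: open sets are the up-sets and closed sets the
down-sets. A clopen set is therefore closed under comparability, i.e. a union of components of
the comparability graph, and each such component is clopen.
-/

open Set Topology

abbrev comparabilityGraph (α : Type*) [Preorder α] : SimpleGraph α :=
  .fromRel (· ≤ ·)

section comparabilityGraph

variable {α : Type*} [Preorder α]

lemma comparabilityGraph_reachable_of_le {a b : α} (h : a ≤ b) :
    (comparabilityGraph α).Reachable a b := by
  obtain rfl | hne := eq_or_ne a b
  · rfl
  · exact ((SimpleGraph.fromRel_adj _ _ _).2 ⟨hne, .inl h⟩).reachable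

lemma isUpperSet_setOf_reachable (a : α) :
    IsUpperSet {b | (comparabilityGraph α).Reachable a b} :=
  fun _ _ hbc hb => hb.trans (comparabilityGraph_reachable_of_le hbc)

lemma isLowerSet_setOf_reachable (a : α) :
    IsLowerSet {b | (comparabilityGraph α).Reachable a b} :=
  fun _ _ hcb hb => hb.trans (comparabilityGraph_reachable_of_le hcb).symm

lemma mem_of_comparabilityGraph_reachable {s : Set α} (hup : IsUpperSet s) (hlow : IsLowerSet s)
    {a b : α} (hab : (comparabilityGraph α).Reachable a b) (ha : a ∈ s) : b ∈ s := by
  obtain ⟨w⟩ := hab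
  induction w with
  | nil => exact ha
  | cons hadj _ ih =>
    exact ih (((SimpleGraph.fromRel_adj _ _ _).1 hadj).2.elim (hup · ha) (hlow · ha))

variable [TopologicalSpace α] [Topology.IsUpperSet α]

lemma isClopen_iff_isUpperSet_and_isLowerSet {s : Set α} :
    IsClopen s ↔ IsUpperSet s ∧ IsLowerSet s := by
  rw [IsClopen, Topology.IsUpperSet.isClosed_iff_isLower, Topology.IsUpperSet.isOpen_iff_isUpperSet,
    and_comm]

theorem connectedSpace_iff_comparabilityGraph_connected :
    ConnectedSpace α ↔ (comparabilityGraph α).Connected := by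
  rw [connectedSpace_iff_clopen, SimpleGraph.connected_iff, and_comm]
  refine and_congr_left fun _ => ⟨fun h a b => ?_, fun h s hs => ?_⟩
  · have hclopen := isClopen_iff_isUpperSet_and_isLowerSet.2
      ⟨isUpperSet_setOf_reachable a, isLowerSet_setOf_reachable a⟩
    have hall := (h _ hclopen).resolve_left (Set.Nonempty.ne_empty ⟨a, .refl a⟩)
    exact eq_univ_iff_forall.1 hall b
  · rw [isClopen_iff_isUpperSet_and_isLowerSet] at hs
    refine s.eq_empty_or_nonempty.imp_right fun ⟨a, ha⟩ => eq_univ_of_forall fun b => ?_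
    exact mem_of_comparabilityGraph_reachable hs.1 hs.2 (h a b) ha

end comparabilityGraph

lemma upperSet_eq_generateFrom_range_Ici (α : Type*) [Preorder α] :
    Topology.upperSet α = TopologicalSpace.generateFrom (range Ici) := by
  refine le_antisymm (le_generateFrom ?_) fun s hs => ?_
  · rintro _ ⟨a, rfl⟩
    exact isUpperSet_Ici a
  · rw [← IsUpperSet.upperClosure hs, coe_upperClosure]
    exact @isOpen_biUnion _ _ (_) _ _ fun a _ =>
      TopologicalSpace.isOpen_generateFrom_of_mem ⟨a, rfl⟩

lemma starTopology_eq_upperSet {α : Type*} (G : Finset (Finset α)) :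
    starTopology G = Topology.upperSet {y : Finset α // y ∈ G} := by
  have hstars : {s | ∃ x ∈ G, s = simplexStar G x} = range Ici := by
    ext s
    exact ⟨fun ⟨x, hx, hs⟩ => ⟨⟨x, hx⟩, hs.symm⟩, fun ⟨y, hy⟩ => ⟨y.1, y.2, hy.symm⟩⟩
  rw [starTopology, hstars, upperSet_eq_generateFrom_range_Ici]

theorem stmt6_general (G : Finset (Finset V)) :
    @ConnectedSpace _ (starTopology G) ↔ (compGraph G).Connected := by
  let _ := starTopology G
  have : Topology.IsUpperSet {y : Finset V // y ∈ G} := ⟨starTopology_eq_upperSet G⟩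
  -- `compGraph G` is `comparabilityGraph` of the inclusion order, definitionally.
  exact connectedSpace_iff_comparabilityGraph_connected

/-- The star topology on a nonempty complex is connected iff the
comparability graph of the complex is connected. -/
theorem stmt6 (G : Finset (Finset V))
    (hG : G.Nonempty)
    (hne : ∀ x ∈ G, x.Nonempty)
    (hdown : ∀ x ∈ G, ∀ y ⊆ x, y.Nonempty → y ∈ G) :
    @ConnectedSpace _ (starTopology G) ↔ (compGraph G).Connected :=
  stmt6_general G
end

section
/- For every finite abstract simplicial complex G, the Gauss–Bonnet relation Σ_{x ∈ G} ω(x)·χ(U(x)) = χ(G) holds, where U(x) is the star of x. -/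
variable {V : Type*} [DecidableEq V]

/-- `ω(x) = (-1)^(dim x) = (-1)^(|x|-1)`. -/
def omegaSgn (x : Finset V) : ℤ := (-1) ^ (x.card - 1)

/-- Euler characteristic of a finite collection of simplices. -/
def chi (A : Finset (Finset V)) : ℤ := ∑ y ∈ A, omegaSgn y

/-- The star `U(x)` of a simplex `x`, as a finite subcollection of `G`. -/
def starF (G : Finset (Finset V)) (x : Finset V) : Finset (Finset V) :=
  G.filter (fun y => x ⊆ y)

lemma gb_inner_sum (y : Finset V) (hy : y.Nonempty) :
    ∑ x ∈ y.powerset.filter Finset.Nonempty, omegaSgn x = 1 := by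
  have h0 : ∑ x ∈ y.powerset.filter Finset.Nonempty, ((-1 : ℤ) ^ x.card) = -1 := by
    have := Finset.sum_powerset_neg_one_pow_card_of_nonempty hy
    rw [← Finset.sum_filter_add_sum_filter_not y.powerset Finset.Nonempty
      (fun x => ((-1 : ℤ) ^ x.card))] at this
    have h1 : ∑ x ∈ y.powerset.filter (fun x => ¬ x.Nonempty), ((-1 : ℤ) ^ x.card) = 1 := by
      have : y.powerset.filter (fun x => ¬ x.Nonempty) = {∅} := by
        ext x
        simp [Finset.not_nonempty_iff_eq_empty]
        exact fun h => h ▸ Finset.empty_subset y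
      rw [this]; simp
    linarith
  have : ∑ x ∈ y.powerset.filter Finset.Nonempty, omegaSgn x
      = ∑ x ∈ y.powerset.filter Finset.Nonempty, (-(-1 : ℤ) ^ x.card) := by
    apply Finset.sum_congr rfl
    intro x hx
    simp only [Finset.mem_filter] at hx
    have hc : 1 ≤ x.card := Finset.card_pos.2 hx.2
    have hp : omegaSgn x * (-1) = (-1 : ℤ) ^ x.card := by
      unfold omegaSgn; rw [← pow_succ]; congr 1; omega
    linarith
  rw [this, Finset.sum_neg_distrib, h0]
  ring

/-- Gauss–Bonnet relation: `∑_x ω(x) χ(U(x)) = χ(G)`. -/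
theorem stmt7 (G : Finset (Finset V))
    (hne : ∀ x ∈ G, x.Nonempty)
    (hdown : ∀ x ∈ G, ∀ y ⊆ x, y.Nonempty → y ∈ G) :
    ∑ x ∈ G, omegaSgn x * chi (starF G x) = chi G := by
  unfold chi starF
  simp only [Finset.mul_sum, Finset.sum_filter]
  rw [Finset.sum_comm]
  apply Finset.sum_congr rfl
  intro y hy
  have : ∑ x ∈ G, (if x ⊆ y then omegaSgn x * omegaSgn y else 0)
      = (∑ x ∈ G.filter (fun x => x ⊆ y), omegaSgn x) * omegaSgn y := by
    rw [Finset.sum_filter, Finset.sum_mul]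
    apply Finset.sum_congr rfl
    intro x _
    split <;> simp
  simp only [mul_ite, mul_zero] at *
  rw [this]
  have hfil : G.filter (fun x => x ⊆ y) = y.powerset.filter Finset.Nonempty := by
    ext x
    simp only [Finset.mem_filter, Finset.mem_powerset]
    constructor
    · rintro ⟨hxG, hxy⟩; exact ⟨hxy, hne x hxG⟩
    · rintro ⟨hxy, hxne⟩; exact ⟨hdown y hy x hxy hxne, hxy⟩
  rw [hfil, gb_inner_sum y (hne y hy), one_mul]
end

section
/- Let G be a finite abstract simplicial complex and define g(x,y) = ω(x)·ω(y)·χ(U(x) ∩ U(y)) for x, y ∈ G. Then for every fixed x ∈ G, the curvature relation Σ_{y ∈ G} g(x,y) = ω(x)·χ(U(x)) holds. -/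
variable {V : Type*} [DecidableEq V]

lemma omegaSgn_eq (y : Finset V) (hy : y.Nonempty) :
    omegaSgn y = -(-1 : ℤ) ^ y.card := by
  obtain ⟨n, hn⟩ : ∃ n, y.card = n + 1 :=
    ⟨y.card - 1, (Nat.succ_pred_eq_of_pos (Finset.card_pos.mpr hy)).symm⟩
  unfold omegaSgn
  rw [hn]
  simp [pow_succ]

lemma sum_omega_powerset (z : Finset V) (hz : z.Nonempty) :
    ∑ y ∈ z.powerset.filter (fun y => y.Nonempty), omegaSgn y = 1 := by
  have h0 : ∑ y ∈ z.powerset, (-1 : ℤ) ^ y.card = 0 := by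
    rw [Finset.sum_powerset_neg_one_pow_card]
    simp [hz.ne_empty]
  have hsplit : z.powerset = insert ∅ (z.powerset.filter (fun y => y.Nonempty)) := by
    ext y
    simp only [Finset.mem_insert, Finset.mem_filter, Finset.mem_powerset,
      Finset.nonempty_iff_ne_empty]
    constructor
    · intro hy
      by_cases hye : y = ∅
      · exact Or.inl hye
      · exact Or.inr ⟨hy, hye⟩
    · rintro (rfl | ⟨hy, _⟩)
      · exact Finset.empty_subset z
      · exact hy
  rw [hsplit, Finset.sum_insert (by simp)] at h0
  simp only [Finset.card_empty, pow_zero] at h0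
  have h1 : ∑ y ∈ z.powerset.filter (fun y => y.Nonempty), (-1 : ℤ) ^ y.card = -1 := by
    linarith
  calc ∑ y ∈ z.powerset.filter (fun y => y.Nonempty), omegaSgn y
      = ∑ y ∈ z.powerset.filter (fun y => y.Nonempty), -(-1 : ℤ) ^ y.card := by
        refine Finset.sum_congr rfl fun y hy => ?_
        simp only [Finset.mem_filter] at hy
        exact omegaSgn_eq y hy.2
    _ = -(-1) := by rw [Finset.sum_neg_distrib, h1]
    _ = 1 := by ring

/-- Curvature relation: for fixed `x`, `∑_y g(x,y) = ω(x) χ(U(x))` with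
`g(x,y) = ω(x) ω(y) χ(U(x) ∩ U(y))`. -/
theorem stmt8 (G : Finset (Finset V))
    (hne : ∀ x ∈ G, x.Nonempty)
    (hdown : ∀ x ∈ G, ∀ y ⊆ x, y.Nonempty → y ∈ G) :
    ∀ x ∈ G,
      ∑ y ∈ G, omegaSgn x * omegaSgn y * chi (starF G x ∩ starF G y)
        = omegaSgn x * chi (starF G x) := by
  intro x hx
  have hkey : ∀ z ∈ G, G.filter (fun y => y ⊆ z) = z.powerset.filter (fun y => y.Nonempty) := by
    intro z hz
    ext y
    simp only [Finset.mem_filter, Finset.mem_powerset]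
    constructor
    · rintro ⟨hyG, hyz⟩; exact ⟨hyz, hne y hyG⟩
    · rintro ⟨hyz, hyne⟩; exact ⟨hdown z hz y hyz hyne, hyz⟩
  have hinter : ∀ y, starF G x ∩ starF G y = G.filter (fun z => x ⊆ z ∧ y ⊆ z) := by
    intro y
    ext z
    simp only [starF, Finset.mem_inter, Finset.mem_filter]
    tauto
  calc ∑ y ∈ G, omegaSgn x * omegaSgn y * chi (starF G x ∩ starF G y)
      = ∑ y ∈ G, ∑ z ∈ G,
          if x ⊆ z ∧ y ⊆ z then omegaSgn x * omegaSgn y * omegaSgn z else 0 := by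
        refine Finset.sum_congr rfl fun y _ => ?_
        rw [hinter y]
        simp only [chi, Finset.sum_filter, Finset.mul_sum]
        refine Finset.sum_congr rfl fun z _ => ?_
        split <;> simp
    _ = ∑ z ∈ G, ∑ y ∈ G,
          if x ⊆ z ∧ y ⊆ z then omegaSgn x * omegaSgn y * omegaSgn z else 0 :=
        Finset.sum_comm
    _ = ∑ z ∈ G, if x ⊆ z then omegaSgn x * omegaSgn z else 0 := by
        refine Finset.sum_congr rfl fun z hz => ?_
        by_cases hxz : x ⊆ z
        · simp only [hxz, true_and, if_true]
          have : ∑ y ∈ G, (if y ⊆ z then omegaSgn x * omegaSgn y * omegaSgn z else 0)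
              = ∑ y ∈ G.filter (fun y => y ⊆ z), omegaSgn x * omegaSgn y * omegaSgn z := by
            rw [Finset.sum_filter]
          rw [this, hkey z hz]
          have : ∑ y ∈ z.powerset.filter (fun y => y.Nonempty),
              omegaSgn x * omegaSgn y * omegaSgn z
              = omegaSgn x * omegaSgn z *
                ∑ y ∈ z.powerset.filter (fun y => y.Nonempty), omegaSgn y := by
            rw [Finset.mul_sum]; refine Finset.sum_congr rfl fun y _ => by ring
          rw [this, sum_omega_powerset z (hne z hz), mul_one]
        · simp [hxz]
    _ = ∑ z ∈ starF G x, omegaSgn x * omegaSgn z := by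
        rw [starF, Finset.sum_filter]
    _ = omegaSgn x * chi (starF G x) := by rw [chi, Finset.mul_sum]
end

section
/- For every finite abstract simplicial complex G, the energy theorem for Euler characteristic holds: Σ_{x ∈ G} Σ_{y ∈ G} ω(x)·ω(y)·χ(U(x) ∩ U(y)) = χ(G). -/
variable {V : Type*} [DecidableEq V]

lemma key (G : Finset (Finset V))
    (hne : ∀ x ∈ G, x.Nonempty)
    (hdown : ∀ x ∈ G, ∀ y ⊆ x, y.Nonempty → y ∈ G)
    {z : Finset V} (hz : z ∈ G) :
    ∑ x ∈ G.filter (fun x => x ⊆ z), omegaSgn x = 1 := by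
  have hset : G.filter (fun x => x ⊆ z) = z.powerset.filter (fun x => x.Nonempty) := by
    ext x
    simp only [Finset.mem_filter, Finset.mem_powerset]
    constructor
    · rintro ⟨hx, hsub⟩; exact ⟨hsub, hne x hx⟩
    · rintro ⟨hsub, hxne⟩; exact ⟨hdown z hz x hsub hxne, hsub⟩
  rw [hset]
  have h0 : ∑ x ∈ z.powerset, (-1 : ℤ) ^ x.card = 0 :=
    Finset.sum_powerset_neg_one_pow_card_of_nonempty (hne z hz)
  have hsplit : z.powerset = insert (∅ : Finset V) (z.powerset.filter (fun x => x.Nonempty)) := by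
    ext x
    simp only [Finset.mem_insert, Finset.mem_filter, Finset.mem_powerset]
    rcases eq_or_ne x ∅ with h | h
    · simp [h]
    · simp [h, Finset.nonempty_iff_ne_empty]
  have hnotmem : (∅ : Finset V) ∉ z.powerset.filter (fun x => x.Nonempty) := by
    simp
  rw [hsplit, Finset.sum_insert hnotmem] at h0
  simp only [Finset.card_empty, pow_zero] at h0
  have h1 : ∑ x ∈ z.powerset.filter (fun x => x.Nonempty), (-1 : ℤ) ^ x.card = -1 := by
    linarith
  have heq : ∑ x ∈ z.powerset.filter (fun x => x.Nonempty), omegaSgn x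
      = -∑ x ∈ z.powerset.filter (fun x => x.Nonempty), (-1 : ℤ) ^ x.card := by
    rw [← Finset.sum_neg_distrib]
    apply Finset.sum_congr rfl
    intro x hx
    have hxne : x.Nonempty := (Finset.mem_filter.mp hx).2
    have hc : x.card = (x.card - 1) + 1 := (Nat.succ_pred_eq_of_pos (Finset.card_pos.mpr hxne)).symm
    have : (-1 : ℤ) ^ x.card = -(-1) ^ (x.card - 1) := by
      conv_lhs => rw [hc]
      rw [pow_succ]; ring
    rw [omegaSgn, this]; ring
  rw [heq, h1]; ring

/-- Energy theorem for the Euler characteristic: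
`∑_x ∑_y ω(x) ω(y) χ(U(x) ∩ U(y)) = χ(G)`. -/
theorem stmt9 (G : Finset (Finset V))
    (hne : ∀ x ∈ G, x.Nonempty)
    (hdown : ∀ x ∈ G, ∀ y ⊆ x, y.Nonempty → y ∈ G) :
    ∑ x ∈ G, ∑ y ∈ G, omegaSgn x * omegaSgn y * chi (starF G x ∩ starF G y)
      = chi G := by
  have hinter : ∀ x y : Finset V, chi (starF G x ∩ starF G y)
      = ∑ z ∈ G, (if x ⊆ z ∧ y ⊆ z then omegaSgn z else 0) := by
    intro x y
    rw [chi, ← Finset.sum_filter]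
    apply Finset.sum_congr
    · ext z
      simp only [starF, Finset.mem_inter, Finset.mem_filter]
      tauto
    · intros; rfl
  have step : ∀ z ∈ G,
      (∑ x ∈ G, ∑ y ∈ G, omegaSgn x * omegaSgn y *
        (if x ⊆ z ∧ y ⊆ z then omegaSgn z else 0)) = omegaSgn z := by
    intro z hz
    have hfac : ∀ x y : Finset V, omegaSgn x * omegaSgn y *
        (if x ⊆ z ∧ y ⊆ z then omegaSgn z else 0)
        = ((if x ⊆ z then omegaSgn x else 0) * (if y ⊆ z then omegaSgn y else 0)) * omegaSgn z := by
      intro x y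
      by_cases h1 : x ⊆ z <;> by_cases h2 : y ⊆ z <;> simp [h1, h2]
    simp only [hfac, ← Finset.sum_mul]
    rw [← Finset.sum_mul_sum]
    simp only [← Finset.sum_filter]
    rw [key G hne hdown hz]
    ring
  calc ∑ x ∈ G, ∑ y ∈ G, omegaSgn x * omegaSgn y * chi (starF G x ∩ starF G y)
      = ∑ x ∈ G, ∑ y ∈ G, ∑ z ∈ G, omegaSgn x * omegaSgn y *
          (if x ⊆ z ∧ y ⊆ z then omegaSgn z else 0) := by
        simp only [hinter, Finset.mul_sum]
    _ = ∑ x ∈ G, ∑ z ∈ G, ∑ y ∈ G, omegaSgn x * omegaSgn y *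
          (if x ⊆ z ∧ y ⊆ z then omegaSgn z else 0) := by
        apply Finset.sum_congr rfl
        intro x _
        exact Finset.sum_comm
    _ = ∑ z ∈ G, ∑ x ∈ G, ∑ y ∈ G, omegaSgn x * omegaSgn y *
          (if x ⊆ z ∧ y ⊆ z then omegaSgn z else 0) := Finset.sum_comm
    _ = ∑ z ∈ G, omegaSgn z := Finset.sum_congr rfl step
    _ = chi G := rfl
end

section
/- For every finite abstract simplicial complex G, the ball and sphere formulas for the Wu characteristic hold: Σ_{x ∈ G} ω(x)·ω₂(B(x)) = ω₂(G) and Σ_{x ∈ G} ω(x)·ω₂(S(x)) = 0, where B(x) is the unit ball and S(x) the unit sphere of x. -/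
variable {V : Type*} [DecidableEq V]

/-- Wu characteristic sum of a subcollection `A` of the complex `G`:
`ω₂(A) = ∑_{x,y ∈ G, x ∩ y ∈ A} ω(x) ω(y)`. -/
def wu2 (G : Finset (Finset V)) (A : Finset (Finset V)) : ℤ :=
  ∑ x ∈ G, ∑ y ∈ G, if x ∩ y ∈ A then omegaSgn x * omegaSgn y else 0

/-- The unit ball `B(x)`: the closure of the star `U(x)`. -/
def ballF (G : Finset (Finset V)) (x : Finset V) : Finset (Finset V) :=
  G.filter (fun y => ∃ z ∈ G, x ⊆ z ∧ y ⊆ z)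

/-- The unit sphere `S(x) = B(x) \ U(x)`. -/
def sphereF (G : Finset (Finset V)) (x : Finset V) : Finset (Finset V) :=
  ballF G x \ starF G x

lemma omegaSgn_eq_s12 {x : Finset V} (hx : x.Nonempty) : omegaSgn x = -(-1 : ℤ) ^ x.card := by
  obtain ⟨n, hn⟩ : ∃ n, x.card = n + 1 :=
    ⟨x.card - 1, by have := Finset.card_pos.mpr hx; omega⟩
  simp [omegaSgn, hn, pow_succ]

/-- Involution (pairing with/without a vertex `v`) lemma: if `S` is a cone-like family
(closed under inserting `v`, and erasing `v` stays in `S ∪ {∅}`), then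
`∑_{x ∈ S} (-1)^|x| = -1`. -/
lemma key_sum (S : Finset (Finset V)) (v : V) (h0 : (∅ : Finset V) ∉ S)
    (hins : ∀ a ∈ insert (∅ : Finset V) S, v ∉ a → insert v a ∈ S)
    (hers : ∀ a ∈ S, v ∈ a → a.erase v ∈ insert (∅ : Finset V) S) :
    ∑ x ∈ S, ((-1 : ℤ)) ^ x.card = -1 := by
  set g : Finset V → Finset V := fun a => if v ∈ a then a.erase v else insert v a with hg
  have hmem : ∀ a ∈ insert (∅ : Finset V) S, g a ∈ insert (∅ : Finset V) S := by
    intro a ha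
    by_cases hv : v ∈ a
    · simp only [hg, hv, if_true]
      have haS : a ∈ S := by
        rcases Finset.mem_insert.mp ha with h | h
        · exact absurd (h ▸ hv) (Finset.notMem_empty v)
        · exact h
      exact hers a haS hv
    · simp only [hg, hv, if_false]
      exact Finset.mem_insert_of_mem (hins a ha hv)
  have hcancel : ∀ a ∈ insert (∅ : Finset V) S,
      ((-1 : ℤ)) ^ a.card + ((-1 : ℤ)) ^ (g a).card = 0 := by
    intro a _
    by_cases hv : v ∈ a
    · simp only [hg, hv, if_true]
      rw [Finset.card_erase_of_mem hv]
      obtain ⟨n, hn⟩ : ∃ n, a.card = n + 1 :=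
        ⟨a.card - 1, by have := Finset.card_pos.mpr ⟨v, hv⟩; omega⟩
      simp [hn, pow_succ]
    · simp only [hg, hv, if_false]
      rw [Finset.card_insert_of_notMem hv]
      simp [pow_succ]
  have hne' : ∀ a, ((-1 : ℤ)) ^ a.card ≠ 0 → g a ≠ a := by
    intro a _ hcontra
    by_cases hv : v ∈ a
    · simp only [hg, hv, if_true] at hcontra
      have := Finset.notMem_erase v a
      rw [hcontra] at this
      exact this hv
    · simp only [hg, hv, if_false] at hcontra
      exact hv (hcontra ▸ Finset.mem_insert_self v a)
  have hinv : ∀ a, v ∈ a ∨ v ∉ a → g (g a) = a := by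
    intro a _
    by_cases hv : v ∈ a
    · simp only [hg, hv, if_true, Finset.notMem_erase, if_false]
      exact Finset.insert_erase hv
    · simp only [hg, hv, if_false, Finset.mem_insert_self, if_true]
      exact Finset.erase_insert hv
  have h : ∑ x ∈ insert (∅ : Finset V) S, ((-1 : ℤ)) ^ x.card = 0 :=
    Finset.sum_involution (fun a _ => g a) hcancel (fun a ha h => hne' a h)
      hmem (fun a ha => hinv a (em _))
  rw [Finset.sum_insert h0] at h
  simp at h
  linarith

/-- If the fiber family `{x ∈ G : w ∈ A x}` is cone-like, its ω-sum is 1;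
then rearranging the double sum gives the Wu-characteristic identity. -/
lemma rearrange (G : Finset (Finset V)) (A : Finset V → Finset (Finset V))
    (hA : ∀ x w, w ∈ A x → w ∈ G)
    (hsum : ∀ w ∈ G, ∑ x ∈ G, (if w ∈ A x then omegaSgn x else 0) = 1) :
    ∑ x ∈ G, omegaSgn x * wu2 G (A x) = wu2 G G := by
  simp only [wu2, Finset.mul_sum, mul_ite, mul_zero]
  rw [Finset.sum_comm]
  refine Finset.sum_congr rfl fun y hy => ?_
  rw [Finset.sum_comm]
  refine Finset.sum_congr rfl fun z hz => ?_
  by_cases h : y ∩ z ∈ G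
  · have h1 := hsum (y ∩ z) h
    calc ∑ x ∈ G, (if y ∩ z ∈ A x then omegaSgn x * (omegaSgn y * omegaSgn z) else 0)
        = ∑ x ∈ G, (if y ∩ z ∈ A x then omegaSgn x else 0) * (omegaSgn y * omegaSgn z) := by
          refine Finset.sum_congr rfl fun x _ => ?_
          split <;> simp
      _ = 1 * (omegaSgn y * omegaSgn z) := by rw [← Finset.sum_mul, h1]
      _ = if y ∩ z ∈ G then omegaSgn y * omegaSgn z else 0 := by simp [h]
  · have : ∀ x, y ∩ z ∉ A x := fun x => mt (hA x (y ∩ z)) h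
    simp [h, this]

/-- Ball and sphere formulas for the Wu characteristic:
`∑_x ω(x) ω₂(B(x)) = ω₂(G)` and `∑_x ω(x) ω₂(S(x)) = 0`. -/
theorem stmt12 (G : Finset (Finset V))
    (hne : ∀ x ∈ G, x.Nonempty)
    (hdown : ∀ x ∈ G, ∀ y ⊆ x, y.Nonempty → y ∈ G) :
    (∑ x ∈ G, omegaSgn x * wu2 G (ballF G x)) = wu2 G G ∧
    (∑ x ∈ G, omegaSgn x * wu2 G (sphereF G x)) = 0 := by
  have hempty : (∅ : Finset V) ∉ G := fun h => by
    simpa using hne ∅ h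
  -- generic: convert ω-sum to (-1)^card sum
  have conv : ∀ (p : Finset V → Prop) [DecidablePred p],
      (∀ x ∈ G.filter p, (-1 : ℤ) ^ x.card = -omegaSgn x) → True := fun _ _ _ => trivial
  have fiber_sum : ∀ (p : Finset V → Prop) [DecidablePred p],
      (∑ x ∈ G.filter p, ((-1 : ℤ)) ^ x.card = -1) →
      ∑ x ∈ G, (if p x then omegaSgn x else 0) = 1 := by
    intro p _ hkey
    rw [Finset.sum_ite, Finset.sum_const_zero, add_zero]
    have : ∀ x ∈ G.filter p, omegaSgn x = -(-1 : ℤ) ^ x.card := fun x hx =>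
      omegaSgn_eq_s12 (hne x (Finset.mem_filter.mp hx).1)
    rw [Finset.sum_congr rfl this, Finset.sum_neg_distrib, hkey]
    ring
  -- ball fiber sum
  have hball_sum : ∀ w ∈ G, ∑ x ∈ G, (if w ∈ ballF G x then omegaSgn x else 0) = 1 := by
    intro w hw
    obtain ⟨v, hv⟩ := hne w hw
    apply fiber_sum
    apply key_sum _ v
    · simp [hempty]
    · intro a ha hva
      rcases Finset.mem_insert.mp ha with h | h
      · subst h
        refine Finset.mem_filter.mpr ⟨hdown w hw (insert v ∅)
          (Finset.insert_subset hv (Finset.empty_subset w)) (Finset.insert_nonempty v ∅), ?_⟩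
        exact Finset.mem_filter.mpr ⟨hw, ⟨w, hw,
          Finset.insert_subset hv (Finset.empty_subset w), Finset.Subset.refl w⟩⟩
      · obtain ⟨haG, hwb⟩ := Finset.mem_filter.mp h
        obtain ⟨hwG, z, hz, haz, hwz⟩ := Finset.mem_filter.mp hwb
        have hia : insert v a ⊆ z := Finset.insert_subset (hwz hv) haz
        refine Finset.mem_filter.mpr ⟨hdown z hz _ hia (Finset.insert_nonempty v a), ?_⟩
        exact Finset.mem_filter.mpr ⟨hwG, ⟨z, hz, hia, hwz⟩⟩
    · intro a ha hva
      obtain ⟨haG, hwb⟩ := Finset.mem_filter.mp ha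
      obtain ⟨hwG, z, hz, haz, hwz⟩ := Finset.mem_filter.mp hwb
      rcases Finset.eq_empty_or_nonempty (a.erase v) with he | he
      · simp [he]
      · refine Finset.mem_insert_of_mem (Finset.mem_filter.mpr
          ⟨hdown z hz _ ((Finset.erase_subset v a).trans haz) he, ?_⟩)
        exact Finset.mem_filter.mpr ⟨hwG, ⟨z, hz, (Finset.erase_subset v a).trans haz, hwz⟩⟩
  -- star fiber sum
  have hstar_sum : ∀ w ∈ G, ∑ x ∈ G, (if w ∈ starF G x then omegaSgn x else 0) = 1 := by
    intro w hw
    obtain ⟨v, hv⟩ := hne w hw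
    apply fiber_sum
    apply key_sum _ v
    · simp [hempty]
    · intro a ha hva
      rcases Finset.mem_insert.mp ha with h | h
      · subst h
        refine Finset.mem_filter.mpr ⟨hdown w hw (insert v ∅)
          (Finset.insert_subset hv (Finset.empty_subset w)) (Finset.insert_nonempty v ∅), ?_⟩
        exact Finset.mem_filter.mpr ⟨hw, Finset.insert_subset hv (Finset.empty_subset w)⟩
      · obtain ⟨haG, hws⟩ := Finset.mem_filter.mp h
        obtain ⟨hwG, haw⟩ := Finset.mem_filter.mp hws
        have hia : insert v a ⊆ w := Finset.insert_subset hv haw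
        refine Finset.mem_filter.mpr ⟨hdown w hw _ hia (Finset.insert_nonempty v a), ?_⟩
        exact Finset.mem_filter.mpr ⟨hwG, hia⟩
    · intro a ha hva
      obtain ⟨haG, hws⟩ := Finset.mem_filter.mp ha
      obtain ⟨hwG, haw⟩ := Finset.mem_filter.mp hws
      rcases Finset.eq_empty_or_nonempty (a.erase v) with he | he
      · simp [he]
      · refine Finset.mem_insert_of_mem (Finset.mem_filter.mpr
          ⟨hdown w hw _ ((Finset.erase_subset v a).trans haw) he, ?_⟩)
        exact Finset.mem_filter.mpr ⟨hwG, (Finset.erase_subset v a).trans haw⟩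
  have hball : ∑ x ∈ G, omegaSgn x * wu2 G (ballF G x) = wu2 G G :=
    rearrange G (ballF G) (fun x w h => (Finset.mem_filter.mp h).1) hball_sum
  have hstar : ∑ x ∈ G, omegaSgn x * wu2 G (starF G x) = wu2 G G :=
    rearrange G (starF G) (fun x w h => (Finset.mem_filter.mp h).1) hstar_sum
  refine ⟨hball, ?_⟩
  have hUB : ∀ x, starF G x ⊆ ballF G x := by
    intro x y hy
    obtain ⟨hyG, hxy⟩ := Finset.mem_filter.mp hy
    exact Finset.mem_filter.mpr ⟨hyG, ⟨y, hyG, hxy, Finset.Subset.refl y⟩⟩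
  have hsph : ∀ x, wu2 G (sphereF G x) = wu2 G (ballF G x) - wu2 G (starF G x) := by
    intro x
    unfold wu2
    rw [← Finset.sum_sub_distrib]
    refine Finset.sum_congr rfl fun y _ => ?_
    rw [← Finset.sum_sub_distrib]
    refine Finset.sum_congr rfl fun z _ => ?_
    by_cases hU : y ∩ z ∈ starF G x
    · have hB : y ∩ z ∈ ballF G x := hUB x hU
      have : y ∩ z ∉ sphereF G x := fun h => (Finset.mem_sdiff.mp h).2 hU
      simp [this, hU, hB]
    · by_cases hB : y ∩ z ∈ ballF G x
      · have : y ∩ z ∈ sphereF G x := Finset.mem_sdiff.mpr ⟨hB, hU⟩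
        simp [this, hU, hB]
      · have : y ∩ z ∉ sphereF G x := fun h => hB (Finset.mem_sdiff.mp h).1
        simp [this, hU, hB]
  calc ∑ x ∈ G, omegaSgn x * wu2 G (sphereF G x)
      = ∑ x ∈ G, (omegaSgn x * wu2 G (ballF G x) - omegaSgn x * wu2 G (starF G x)) := by
        refine Finset.sum_congr rfl fun x _ => ?_
        rw [hsph x, mul_sub]
    _ = wu2 G G - wu2 G G := by rw [Finset.sum_sub_distrib, hball, hstar]
    _ = 0 := sub_self _
end

section
/- Let G be a finite abstract simplicial complex, R a commutative ring, and h : G × G → R an arbitrary function. For a subset A ⊆ G define the internal energy ω_h(A) = Σ over pairs (a,b) ∈ G × G with a ∩ b ∈ A of h(a,b), and define the potential energy g(x,y) = ω(x)·ω(y)·ω_h(U(x) ∩ U(y)) for x, y ∈ G. Then the total potential energy equals the total internal energy: Σ_{x ∈ G} Σ_{y ∈ G} g(x,y) = ω_h(G) = Σ over pairs (a,b) with a ∩ b nonempty of h(a,b). -/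
variable {V : Type*} [DecidableEq V]

/-- Internal energy of a subcollection `A` of `G` for an interaction `h`:
`ω_h(A) = ∑_{a,b ∈ G, a ∩ b ∈ A} h(a,b)`. -/
def energy {R : Type*} [CommRing R] (G : Finset (Finset V))
    (h : Finset V → Finset V → R) (A : Finset (Finset V)) : R :=
  ∑ a ∈ G, ∑ b ∈ G, if a ∩ b ∈ A then h a b else 0

/-- Move the first of three nested sums to the inside. -/
lemma sum_swap3 {M : Type*} [AddCommMonoid M] {α β γ : Type*}
    (s : Finset α) (t : Finset β) (u : Finset γ) (f : α → β → γ → M) :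
    ∑ x ∈ s, ∑ a ∈ t, ∑ b ∈ u, f x a b = ∑ a ∈ t, ∑ b ∈ u, ∑ x ∈ s, f x a b := by
  rw [Finset.sum_comm]
  exact Finset.sum_congr rfl fun a _ => Finset.sum_comm

/-- For a simplex `s ∈ G`, the signed sum of `ω` over all simplices of `G`
contained in `s` equals `1` (the Euler characteristic of a simplex). -/
lemma omega_sum {R : Type*} [CommRing R] (G : Finset (Finset V))
    (hne : ∀ x ∈ G, x.Nonempty)
    (hdown : ∀ x ∈ G, ∀ y ⊆ x, y.Nonempty → y ∈ G)
    {s : Finset V} (hs : s ∈ G) :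
    (∑ x ∈ G.filter (fun x => x ⊆ s), (omegaSgn x : R)) = 1 := by
  have hfe : G.filter (fun x => x ⊆ s) = s.powerset.filter Finset.Nonempty := by
    ext t
    simp only [Finset.mem_filter, Finset.mem_powerset]
    constructor
    · rintro ⟨ht, hts⟩; exact ⟨hts, hne t ht⟩
    · rintro ⟨hts, htne⟩; exact ⟨hdown s hs t hts htne, hts⟩
  rw [hfe]
  have key : (∑ t ∈ s.powerset, (-1 : ℤ) ^ t.card) = 0 :=
    Finset.sum_powerset_neg_one_pow_card_of_nonempty (hne s hs)
  have h2 : (∑ t ∈ s.powerset.filter Finset.Nonempty, (omegaSgn t : ℤ)) = 1 := by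
    have hsplit : (∑ t ∈ s.powerset, (-1 : ℤ) ^ t.card)
        = (∑ t ∈ s.powerset.filter Finset.Nonempty, (-1 : ℤ) ^ t.card) + 1 := by
      rw [← Finset.sum_filter_add_sum_filter_not s.powerset Finset.Nonempty]
      congr 1
      have : s.powerset.filter (fun t => ¬ t.Nonempty) = {∅} := by
        ext t
        simp [Finset.not_nonempty_iff_eq_empty]
        rintro rfl; exact Finset.empty_subset s
      rw [this]; simp
    have hval : (∑ t ∈ s.powerset.filter Finset.Nonempty, (-1 : ℤ) ^ t.card) = -1 := by
      omega
    have hterm : ∀ t ∈ s.powerset.filter Finset.Nonempty,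
        (omegaSgn t : ℤ) = -(-1 : ℤ) ^ t.card := by
      intro t ht
      simp only [Finset.mem_filter] at ht
      have hc : t.card ≠ 0 := by
        simpa [Finset.card_eq_zero, ← Finset.nonempty_iff_ne_empty] using ht.2.ne_empty
      unfold omegaSgn
      have hcc : t.card = (t.card - 1) + 1 := by omega
      rw [hcc, pow_succ]
      have : t.card - 1 + 1 - 1 = t.card - 1 := by omega
      rw [this]
      ring
    rw [Finset.sum_congr rfl hterm, Finset.sum_neg_distrib, hval]
    ring
  have hcast : ((∑ t ∈ s.powerset.filter Finset.Nonempty, omegaSgn t : ℤ) : R)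
      = ((1 : ℤ) : R) := by rw [h2]
  push_cast at hcast
  exact hcast

/-- Energy theorem: the total potential energy
`∑_{x,y} ω(x) ω(y) ω_h(U(x) ∩ U(y))` equals the total internal energy
`ω_h(G) = ∑_{a ∩ b ≠ ∅} h(a,b)`. -/
theorem stmt13 {R : Type*} [CommRing R] (G : Finset (Finset V))
    (hne : ∀ x ∈ G, x.Nonempty)
    (hdown : ∀ x ∈ G, ∀ y ⊆ x, y.Nonempty → y ∈ G)
    (h : Finset V → Finset V → R) :
    (∑ x ∈ G, ∑ y ∈ G,
        (omegaSgn x : R) * (omegaSgn y : R) * energy G h (starF G x ∩ starF G y))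
      = energy G h G ∧
    energy G h G = ∑ a ∈ G, ∑ b ∈ G, if (a ∩ b).Nonempty then h a b else 0 := by
  constructor
  · unfold energy
    simp_rw [Finset.mul_sum]
    calc (∑ x ∈ G, ∑ y ∈ G, ∑ a ∈ G, ∑ b ∈ G,
            (omegaSgn x : R) * (omegaSgn y : R) *
              (if a ∩ b ∈ starF G x ∩ starF G y then h a b else 0))
        = ∑ x ∈ G, ∑ a ∈ G, ∑ b ∈ G, ∑ y ∈ G,
            (omegaSgn x : R) * (omegaSgn y : R) *
              (if a ∩ b ∈ starF G x ∩ starF G y then h a b else 0) :=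
          Finset.sum_congr rfl fun x _ => sum_swap3 G G G _
      _ = ∑ a ∈ G, ∑ b ∈ G, ∑ x ∈ G, ∑ y ∈ G,
            (omegaSgn x : R) * (omegaSgn y : R) *
              (if a ∩ b ∈ starF G x ∩ starF G y then h a b else 0) :=
          sum_swap3 G G G _
      _ = ∑ a ∈ G, ∑ b ∈ G, if a ∩ b ∈ G then h a b else 0 := by
          apply Finset.sum_congr rfl; intro a _
          apply Finset.sum_congr rfl; intro b _
          by_cases hab : a ∩ b ∈ G
          · have hcond : ∀ x y : Finset V,
                (a ∩ b ∈ starF G x ∩ starF G y) ↔ (x ⊆ a ∩ b ∧ y ⊆ a ∩ b) := by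
              intro x y
              simp [starF, Finset.mem_inter, Finset.mem_filter, hab]
            calc (∑ x ∈ G, ∑ y ∈ G, (omegaSgn x : R) * (omegaSgn y : R) *
                  (if a ∩ b ∈ starF G x ∩ starF G y then h a b else 0))
                = ∑ x ∈ G, ∑ y ∈ G, (if x ⊆ a ∩ b ∧ y ⊆ a ∩ b then
                    (omegaSgn x : R) * (omegaSgn y : R) * h a b else 0) := by
                  apply Finset.sum_congr rfl; intro x _
                  apply Finset.sum_congr rfl; intro y _
                  rw [if_congr (hcond x y) rfl rfl]
                  split_ifs <;> simp
              _ = ∑ x ∈ G.filter (fun x => x ⊆ a ∩ b),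
                    ∑ y ∈ G.filter (fun y => y ⊆ a ∩ b),
                    (omegaSgn x : R) * (omegaSgn y : R) * h a b := by
                  rw [Finset.sum_filter]
                  apply Finset.sum_congr rfl; intro x _
                  rw [Finset.sum_filter]
                  by_cases hx : x ⊆ a ∩ b <;> simp [hx]
              _ = (∑ x ∈ G.filter (fun x => x ⊆ a ∩ b), (omegaSgn x : R)) *
                  (∑ y ∈ G.filter (fun y => y ⊆ a ∩ b), (omegaSgn y : R)) * h a b := by
                  rw [Finset.sum_mul_sum, Finset.sum_mul]
                  apply Finset.sum_congr rfl; intro x _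
                  rw [Finset.sum_mul]
              _ = h a b := by
                  rw [omega_sum G hne hdown hab]; ring
              _ = if a ∩ b ∈ G then h a b else 0 := by simp [hab]
          · have hno : ∀ x y : Finset V, a ∩ b ∉ starF G x ∩ starF G y := by
              intro x y
              simp [starF, Finset.mem_inter, Finset.mem_filter, hab]
            simp [hno, hab]
  · unfold energy
    apply Finset.sum_congr rfl; intro a ha
    apply Finset.sum_congr rfl; intro b _
    congr 1
    apply propext
    constructor
    · exact hne _
    · intro hnonempty
      exact hdown a ha (a ∩ b) Finset.inter_subset_left hnonempty
end

section
/- Let G be a finite abstract simplicial complex, R a commutative ring, and h : G × G × G → R an arbitrary function. For a subset A ⊆ G define the internal cubic energy ω₃_h(A) = Σ over triples (a,b,c) ∈ G³ with a ∩ b ∩ c ∈ A of h(a,b,c), and define g₃(x,y,z) = ω(x)·ω(y)·ω(z)·ω₃_h(U(x) ∩ U(y) ∩ U(z)) for x, y, z ∈ G. Then Σ_{x,y,z ∈ G} g₃(x,y,z) = ω₃_h(G) = Σ over triples (a,b,c) with a ∩ b ∩ c nonempty of h(a,b,c). -/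
variable {V : Type*} [DecidableEq V]

/-- Internal cubic energy of a subcollection `A` of `G` for an interaction `h`:
`ω₃_h(A) = ∑_{a,b,c ∈ G, a ∩ b ∩ c ∈ A} h(a,b,c)`. -/
def energy3 {R : Type*} [CommRing R] (G : Finset (Finset V))
    (h : Finset V → Finset V → Finset V → R) (A : Finset (Finset V)) : R :=
  ∑ a ∈ G, ∑ b ∈ G, ∑ c ∈ G, if a ∩ b ∩ c ∈ A then h a b c else 0

/-- Over a simplicial complex, the signs of the simplices contained in a fixed
simplex `s ∈ G` sum to `1`. -/
lemma sum_omega_subsets {R : Type*} [CommRing R] (G : Finset (Finset V))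
    (hne : ∀ x ∈ G, x.Nonempty)
    (hdown : ∀ x ∈ G, ∀ y ⊆ x, y.Nonempty → y ∈ G)
    (s : Finset V) (hs : s ∈ G) :
    ∑ x ∈ G.filter (· ⊆ s), ((omegaSgn x : ℤ) : R) = 1 := by
  have hset : G.filter (· ⊆ s) = s.powerset.filter Finset.Nonempty := by
    ext x
    simp only [Finset.mem_filter, Finset.mem_powerset]
    exact ⟨fun ⟨hxG, hxs⟩ => ⟨hxs, hne x hxG⟩,
      fun ⟨hxs, hxne⟩ => ⟨hdown s hs x hxs hxne, hxs⟩⟩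
  have hsne : s.Nonempty := hne s hs
  have hpow : ∑ t ∈ s.powerset, (-1 : ℤ) ^ t.card = 0 :=
    Finset.sum_powerset_neg_one_pow_card_of_nonempty hsne
  have hsplit := Finset.sum_filter_add_sum_filter_not s.powerset Finset.Nonempty
    (fun t => (-1 : ℤ) ^ t.card)
  have hnotne : s.powerset.filter (fun t => ¬ t.Nonempty) = {∅} := by
    ext t
    simp [Finset.not_nonempty_iff_eq_empty]
    intro ht; subst ht; exact Finset.empty_subset s
  have h1 : ∑ t ∈ s.powerset.filter Finset.Nonempty, (-1 : ℤ) ^ t.card = -1 := by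
    rw [hnotne] at hsplit
    simp only [Finset.sum_singleton, Finset.card_empty, pow_zero] at hsplit
    rw [hpow] at hsplit
    linarith
  have hterm : ∀ t ∈ s.powerset.filter Finset.Nonempty,
      (omegaSgn t : ℤ) = -((-1 : ℤ) ^ t.card) := by
    intro t ht
    obtain ⟨-, htne⟩ := Finset.mem_filter.mp ht
    have hc : 1 ≤ t.card := Finset.card_pos.mpr htne
    have hcc : t.card = (t.card - 1) + 1 := (Nat.succ_pred_eq_of_pos hc).symm
    unfold omegaSgn
    conv_rhs => rw [hcc]
    rw [pow_succ]; ring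
  have hz : ∑ x ∈ G.filter (· ⊆ s), (omegaSgn x : ℤ) = 1 := by
    rw [hset, Finset.sum_congr rfl hterm, Finset.sum_neg_distrib, h1]
    ring
  rw [← Int.cast_sum, hz, Int.cast_one]

/-- Swap two blocks of three sums. -/
lemma sum_comm33 {M : Type*} [AddCommMonoid M] {α β : Type*} (s : Finset α) (t : Finset β)
    (f : α → α → α → β → β → β → M) :
    ∑ x ∈ s, ∑ y ∈ s, ∑ z ∈ s, ∑ a ∈ t, ∑ b ∈ t, ∑ c ∈ t, f x y z a b c
      = ∑ a ∈ t, ∑ b ∈ t, ∑ c ∈ t, ∑ x ∈ s, ∑ y ∈ s, ∑ z ∈ s, f x y z a b c := by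
  calc ∑ x ∈ s, ∑ y ∈ s, ∑ z ∈ s, ∑ a ∈ t, ∑ b ∈ t, ∑ c ∈ t, f x y z a b c
      = ∑ p ∈ s ×ˢ s ×ˢ s, ∑ q ∈ t ×ˢ t ×ˢ t,
          f p.1 p.2.1 p.2.2 q.1 q.2.1 q.2.2 := by
        simp only [Finset.sum_product]
    _ = ∑ q ∈ t ×ˢ t ×ˢ t, ∑ p ∈ s ×ˢ s ×ˢ s,
          f p.1 p.2.1 p.2.2 q.1 q.2.1 q.2.2 := Finset.sum_comm
    _ = _ := by simp only [Finset.sum_product]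

lemma innerA {R : Type*} [CommRing R] (G : Finset (Finset V))
    (hne : ∀ x ∈ G, x.Nonempty)
    (hdown : ∀ x ∈ G, ∀ y ⊆ x, y.Nonempty → y ∈ G)
    (v : R) (s : Finset V) :
    ∑ x ∈ G, ∑ y ∈ G, ∑ z ∈ G,
        (if s ∈ starF G x ∩ starF G y ∩ starF G z then
          (omegaSgn x : R) * (omegaSgn y : R) * (omegaSgn z : R) * v else 0)
      = if s ∈ G then v else 0 := by
  by_cases hsG : s ∈ G
  · simp only [starF, Finset.mem_inter, Finset.mem_filter, hsG, true_and, and_assoc, if_pos hsG]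
    have hrw : ∀ x y z : Finset V,
        (if x ⊆ s ∧ y ⊆ s ∧ z ⊆ s then
            (omegaSgn x : R) * (omegaSgn y : R) * (omegaSgn z : R) * v else 0)
        = (if x ⊆ s then (omegaSgn x : R) else 0) *
            ((if y ⊆ s then (omegaSgn y : R) else 0) *
              ((if z ⊆ s then (omegaSgn z : R) else 0) * v)) := by
      intro x y z
      by_cases hx : x ⊆ s <;> by_cases hy : y ⊆ s <;> by_cases hz : z ⊆ s <;>
        simp [hx, hy, hz] <;> ring
    calc ∑ x ∈ G, ∑ y ∈ G, ∑ z ∈ G,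
          (if x ⊆ s ∧ y ⊆ s ∧ z ⊆ s then
            (omegaSgn x : R) * (omegaSgn y : R) * (omegaSgn z : R) * v else 0)
        = ∑ x ∈ G, ∑ y ∈ G, ∑ z ∈ G,
            (if x ⊆ s then (omegaSgn x : R) else 0) *
              ((if y ⊆ s then (omegaSgn y : R) else 0) *
                ((if z ⊆ s then (omegaSgn z : R) else 0) * v)) := by
          exact Finset.sum_congr rfl fun x _ => Finset.sum_congr rfl fun y _ =>
            Finset.sum_congr rfl fun z _ => hrw x y z
      _ = (∑ x ∈ G, if x ⊆ s then (omegaSgn x : R) else 0) *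
            ((∑ y ∈ G, if y ⊆ s then (omegaSgn y : R) else 0) *
              ((∑ z ∈ G, if z ⊆ s then (omegaSgn z : R) else 0) * v)) := by
          simp only [Finset.sum_mul, Finset.mul_sum]
          exact Finset.sum_congr rfl fun _ _ => Finset.sum_congr rfl fun _ _ =>
            Finset.sum_congr rfl fun _ _ => by ring
      _ = v := by
          have hone : (∑ x ∈ G, if x ⊆ s then (omegaSgn x : R) else 0) = 1 := by
            rw [← Finset.sum_filter]
            exact sum_omega_subsets G hne hdown s hsG
          rw [hone, one_mul, one_mul, one_mul]
  · simp only [starF, Finset.mem_inter, Finset.mem_filter, hsG, false_and, if_false,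
      Finset.sum_const_zero, if_neg hsG]

/-- Cubic energy theorem: the total cubic potential energy
`∑_{x,y,z} ω(x) ω(y) ω(z) ω₃_h(U(x) ∩ U(y) ∩ U(z))` equals the total internal
cubic energy `ω₃_h(G) = ∑_{a ∩ b ∩ c ≠ ∅} h(a,b,c)`. -/
theorem stmt14 {R : Type*} [CommRing R] (G : Finset (Finset V))
    (hne : ∀ x ∈ G, x.Nonempty)
    (hdown : ∀ x ∈ G, ∀ y ⊆ x, y.Nonempty → y ∈ G)
    (h : Finset V → Finset V → Finset V → R) :
    (∑ x ∈ G, ∑ y ∈ G, ∑ z ∈ G,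
        (omegaSgn x : R) * (omegaSgn y : R) * (omegaSgn z : R) *
          energy3 G h (starF G x ∩ starF G y ∩ starF G z))
      = energy3 G h G ∧
    energy3 G h G =
      ∑ a ∈ G, ∑ b ∈ G, ∑ c ∈ G,
        if (a ∩ b ∩ c).Nonempty then h a b c else 0 := by
  constructor
  · simp only [energy3, Finset.mul_sum, mul_ite, mul_zero]
    rw [sum_comm33 G G (fun x y z a b c =>
      if a ∩ b ∩ c ∈ starF G x ∩ starF G y ∩ starF G z then
        (omegaSgn x : R) * (omegaSgn y : R) * (omegaSgn z : R) * h a b c else 0)]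
    exact Finset.sum_congr rfl fun a _ => Finset.sum_congr rfl fun b _ =>
      Finset.sum_congr rfl fun c _ => innerA G hne hdown (h a b c) (a ∩ b ∩ c)
  · unfold energy3
    refine Finset.sum_congr rfl fun a ha => Finset.sum_congr rfl fun b _ =>
      Finset.sum_congr rfl fun c _ => ?_
    refine if_congr ⟨fun hm => hne _ hm, fun hm => ?_⟩ rfl rfl
    exact hdown a ha _ ((Finset.inter_subset_left).trans Finset.inter_subset_left) hm
end

section
/- For every finite abstract simplicial complex G, the quadratic energy identity for the Wu characteristic holds: ω₂(G) = Σ_{x ∈ G} Σ_{y ∈ G} ω(x)·ω(y)·χ(U(x) ∩ U(y))². -/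
variable {V : Type*} [DecidableEq V]

lemma key_sum_s15 (s : Finset V) :
    (∑ x ∈ s.powerset.filter (fun t => t.Nonempty), omegaSgn x)
      = if s.Nonempty then 1 else 0 := by
  have htot := Finset.sum_powerset_neg_one_pow_card (x := s)
  have hsplit := Finset.sum_filter_add_sum_filter_not s.powerset
    (fun t => t.Nonempty) (fun t => (-1 : ℤ) ^ t.card)
  have hneg : s.powerset.filter (fun t => ¬ t.Nonempty) = {∅} := by
    ext t
    simp [Finset.not_nonempty_iff_eq_empty]
    rintro rfl; exact Finset.empty_subset s
  have homega : ∀ t ∈ s.powerset.filter (fun t => t.Nonempty),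
      omegaSgn t = -((-1 : ℤ) ^ t.card) := by
    intro t ht
    simp only [Finset.mem_filter] at ht
    obtain ⟨-, htne⟩ := ht
    have hc : 1 ≤ t.card := Finset.card_pos.mpr htne
    obtain ⟨n, hn⟩ : ∃ n, t.card = n + 1 := ⟨t.card - 1, by omega⟩
    unfold omegaSgn
    rw [hn, Nat.add_sub_cancel, pow_succ]
    ring
  rw [Finset.sum_congr rfl homega, Finset.sum_neg_distrib]
  rw [hneg] at hsplit
  simp only [Finset.sum_singleton, Finset.card_empty, pow_zero] at hsplit
  rw [htot] at hsplit
  rcases s.eq_empty_or_nonempty with rfl | hs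
  · simp at hsplit ⊢; omega
  · rw [if_pos hs]
    rw [if_neg (Finset.nonempty_iff_ne_empty.mp hs)] at hsplit
    omega

lemma Tval (G : Finset (Finset V))
    (hne : ∀ x ∈ G, x.Nonempty)
    (hdown : ∀ x ∈ G, ∀ y ⊆ x, y.Nonempty → y ∈ G)
    {z w : Finset V} (hz : z ∈ G) :
    (∑ x ∈ G, if x ⊆ z ∧ x ⊆ w then omegaSgn x else 0)
      = if (z ∩ w).Nonempty then 1 else 0 := by
  rw [← Finset.sum_filter]
  have hset : G.filter (fun x => x ⊆ z ∧ x ⊆ w)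
      = (z ∩ w).powerset.filter (fun t => t.Nonempty) := by
    ext t
    simp only [Finset.mem_filter, Finset.mem_powerset, Finset.subset_inter_iff]
    constructor
    · rintro ⟨ht, hs⟩; exact ⟨hs, hne t ht⟩
    · rintro ⟨⟨h1, h2⟩, htne⟩
      exact ⟨hdown z hz t h1 htne, h1, h2⟩
  rw [hset]; exact key_sum_s15 _

lemma ite_and_split (P Q : Prop) [Decidable P] [Decidable Q] (a : ℤ) :
    (if P ∧ Q then a else 0) = (if P then 1 else 0) * ((if Q then 1 else 0) * a) := by
  by_cases hP : P <;> by_cases hQ : Q <;> simp [hP, hQ]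

lemma sum4 {α : Type*} (s : Finset α) (f : α → α → α → α → ℤ) :
    (∑ x ∈ s, ∑ y ∈ s, ∑ z ∈ s, ∑ w ∈ s, f x y z w)
      = ∑ z ∈ s, ∑ w ∈ s, ∑ x ∈ s, ∑ y ∈ s, f x y z w :=
  calc (∑ x ∈ s, ∑ y ∈ s, ∑ z ∈ s, ∑ w ∈ s, f x y z w)
      = ∑ x ∈ s, ∑ z ∈ s, ∑ y ∈ s, ∑ w ∈ s, f x y z w :=
        Finset.sum_congr rfl fun x _ => Finset.sum_comm
    _ = ∑ z ∈ s, ∑ x ∈ s, ∑ y ∈ s, ∑ w ∈ s, f x y z w := Finset.sum_comm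
    _ = ∑ z ∈ s, ∑ x ∈ s, ∑ w ∈ s, ∑ y ∈ s, f x y z w :=
        Finset.sum_congr rfl fun z _ => Finset.sum_congr rfl fun x _ => Finset.sum_comm
    _ = ∑ z ∈ s, ∑ w ∈ s, ∑ x ∈ s, ∑ y ∈ s, f x y z w :=
        Finset.sum_congr rfl fun z _ => Finset.sum_comm

/-- Quadratic energy identity for the Wu characteristic:
`ω₂(G) = ∑_x ∑_y ω(x) ω(y) χ(U(x) ∩ U(y))²`. -/
theorem stmt15 (G : Finset (Finset V))
    (hne : ∀ x ∈ G, x.Nonempty)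
    (hdown : ∀ x ∈ G, ∀ y ⊆ x, y.Nonempty → y ∈ G) :
    wu2 G G =
      ∑ x ∈ G, ∑ y ∈ G,
        omegaSgn x * omegaSgn y * (chi (starF G x ∩ starF G y)) ^ 2 := by
  have hchi : ∀ x y : Finset V, chi (starF G x ∩ starF G y)
      = ∑ z ∈ G, if x ⊆ z ∧ y ⊆ z then omegaSgn z else 0 := by
    intro x y
    unfold chi starF
    rw [← Finset.filter_and, Finset.sum_filter]
  calc wu2 G G
      = ∑ x ∈ G, ∑ y ∈ G, omegaSgn x * omegaSgn y *
          ((∑ z ∈ G, if z ⊆ x ∧ z ⊆ y then omegaSgn z else 0) *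
           (∑ w ∈ G, if w ⊆ x ∧ w ⊆ y then omegaSgn w else 0)) := by
        unfold wu2
        refine Finset.sum_congr rfl fun x hx => Finset.sum_congr rfl fun y hy => ?_
        rw [Tval G hne hdown hx]
        have hmem : x ∩ y ∈ G ↔ (x ∩ y).Nonempty :=
          ⟨fun h => hne _ h, fun h => hdown _ hx _ Finset.inter_subset_left h⟩
        by_cases h : (x ∩ y).Nonempty <;> simp [h, hmem]
    _ = ∑ x ∈ G, ∑ y ∈ G, ∑ z ∈ G, ∑ w ∈ G,
          omegaSgn x * omegaSgn y *
            ((if z ⊆ x ∧ z ⊆ y then omegaSgn z else 0) *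
             (if w ⊆ x ∧ w ⊆ y then omegaSgn w else 0)) := by
        refine Finset.sum_congr rfl fun x _ => Finset.sum_congr rfl fun y _ => ?_
        rw [Finset.sum_mul_sum, Finset.mul_sum]
        exact Finset.sum_congr rfl fun z _ => by rw [Finset.mul_sum]
    _ = ∑ z ∈ G, ∑ w ∈ G, ∑ x ∈ G, ∑ y ∈ G,
          omegaSgn x * omegaSgn y *
            ((if z ⊆ x ∧ z ⊆ y then omegaSgn z else 0) *
             (if w ⊆ x ∧ w ⊆ y then omegaSgn w else 0)) := sum4 G _
    _ = ∑ x ∈ G, ∑ y ∈ G, ∑ z ∈ G, ∑ w ∈ G,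
          omegaSgn x * omegaSgn y *
            ((if x ⊆ z ∧ y ⊆ z then omegaSgn z else 0) *
             (if x ⊆ w ∧ y ⊆ w then omegaSgn w else 0)) := by
        refine Finset.sum_congr rfl fun x _ => Finset.sum_congr rfl fun y _ =>
          Finset.sum_congr rfl fun z _ => Finset.sum_congr rfl fun w _ => ?_
        simp only [ite_and_split]
        ring
    _ = ∑ x ∈ G, ∑ y ∈ G,
          omegaSgn x * omegaSgn y * (chi (starF G x ∩ starF G y)) ^ 2 := by
        refine Finset.sum_congr rfl fun x _ => Finset.sum_congr rfl fun y _ => ?_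
        rw [hchi x y, sq, Finset.sum_mul_sum, Finset.mul_sum]
        exact Finset.sum_congr rfl fun z _ => by rw [Finset.mul_sum]
end

section
/- Let G be a finite simple graph on a finite vertex set V and let f : V → ℝ be locally injective, i.e. f(u) ≠ f(w) whenever u and w are adjacent. Then the Poincaré–Hopf formula holds: Σ_{v ∈ V} i_f(v) = χ(G), where i_f(v) = 1 − χ(S⁻_f(v)). -/
open scoped Classical

variable {V : Type*} [Fintype V]

/-- Euler characteristic of the subgraph of a finite simple graph `G` induced
on a vertex set `A`: the sum over all nonempty cliques `K` of `G` contained in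
`A` of `(-1)^(|K|+1)`. -/
noncomputable def chiInduced (G : SimpleGraph V) (A : Set V) : ℤ :=
  ∑ K ∈ Finset.univ.filter
      (fun K : Finset V => K.Nonempty ∧ G.IsClique (K : Set V) ∧ (K : Set V) ⊆ A),
    (-1 : ℤ) ^ (K.card + 1)

/-- Poincaré–Hopf: for a locally injective function `f` on the vertices of a
finite simple graph, `∑_v i_f(v) = χ(G)` where
`i_f(v) = 1 - χ(S⁻_f(v))`. -/
theorem stmt16 (G : SimpleGraph V) (f : V → ℝ)
    (hf : ∀ u w : V, G.Adj u w → f u ≠ f w) :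
    ∑ v : V, (1 - chiInduced G {w | G.Adj v w ∧ f w < f v})
      = chiInduced G Set.univ := by
  classical
  set C : Finset (Finset V) := Finset.univ.filter
      (fun K : Finset V => K.Nonempty ∧ G.IsClique (K : Set V) ∧ (K : Set V) ⊆ Set.univ)
    with hC
  -- For each vertex `v`, the sum over cliques whose `f`-maximum is attained at `v`
  -- equals the Poincaré–Hopf index of `f` at `v`.
  have key : ∀ v : V,
      ∑ K ∈ C.filter (fun K => v ∈ K ∧ ∀ w ∈ K, f w ≤ f v), (-1 : ℤ) ^ (K.card + 1)
        = 1 - chiInduced G {w | G.Adj v w ∧ f w < f v} := by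
    intro v
    set S : Finset (Finset V) := Finset.univ.filter
        (fun K : Finset V => K.Nonempty ∧ G.IsClique (K : Set V) ∧
          (K : Set V) ⊆ {w | G.Adj v w ∧ f w < f v}) with hS
    have hvA : ∀ K' ∈ S, v ∉ K' := by
      intro K' hK' hv
      simp only [hS, Finset.mem_filter] at hK'
      exact G.irrefl (hK'.2.2.2 hv).1
    have hTeq : C.filter (fun K => v ∈ K ∧ ∀ w ∈ K, f w ≤ f v)
        = insert {v} (S.image (insert v)) := by
      ext K
      simp only [Finset.mem_insert, Finset.mem_image, Finset.mem_filter, Finset.mem_univ,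
        true_and, hC, hS]
      constructor
      · rintro ⟨⟨hne, hcl, -⟩, hvK, hmax⟩
        by_cases h : K = {v}
        · exact Or.inl h
        · refine Or.inr ⟨K.erase v, ⟨?_, ?_, ?_⟩, Finset.insert_erase hvK⟩
          · by_contra hemp
            rw [Finset.not_nonempty_iff_eq_empty] at hemp
            apply h
            apply Finset.eq_singleton_iff_unique_mem.2 ⟨hvK, ?_⟩
            intro b hb
            by_contra hbv
            have : b ∈ K.erase v := Finset.mem_erase.2 ⟨hbv, hb⟩
            simp [hemp] at this
          · exact hcl.subset (by exact_mod_cast Finset.erase_subset v K)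
          · intro w hw
            have hw' : w ∈ K.erase v := hw
            have hwv : w ≠ v := (Finset.mem_erase.1 hw').1
            have hwK : w ∈ K := (Finset.mem_erase.1 hw').2
            have hadj : G.Adj v w := hcl (by exact_mod_cast hvK) (by exact_mod_cast hwK)
              (Ne.symm hwv)
            exact ⟨hadj, lt_of_le_of_ne (hmax w hwK) (Ne.symm (hf v w hadj))⟩
      · rintro (rfl | ⟨K', ⟨hne, hcl, hsub⟩, rfl⟩)
        · refine ⟨⟨⟨v, Finset.mem_singleton_self v⟩, ?_, by simp⟩,
            Finset.mem_singleton_self v, ?_⟩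
          · intro a ha b hb hab
            simp only [Finset.coe_singleton, Set.mem_singleton_iff] at ha hb
            exact absurd (ha.trans hb.symm) hab
          · intro w hw
            rw [Finset.mem_singleton] at hw
            exact hw ▸ le_refl _
        · refine ⟨⟨Finset.insert_nonempty v K', ?_, by simp⟩,
            Finset.mem_insert_self v K', ?_⟩
          · rw [Finset.coe_insert]
            exact hcl.insert (fun b hb _ => (hsub hb).1)
          · intro w hw
            rcases Finset.mem_insert.1 hw with rfl | hw'
            · exact le_refl _
            · exact (hsub hw').2.le
    have hnotmem : ({v} : Finset V) ∉ S.image (insert v) := by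
      intro hmem
      obtain ⟨K', hK', hKe⟩ := Finset.mem_image.1 hmem
      have hcard : K'.card + 1 = 1 := by
        rw [← Finset.card_insert_of_notMem (hvA K' hK'), hKe, Finset.card_singleton]
      have hK'ne : K'.Nonempty := by
        simp only [hS, Finset.mem_filter] at hK'; exact hK'.2.1
      exact absurd (Finset.card_eq_zero.1 (by omega)) (Finset.nonempty_iff_ne_empty.1 hK'ne)
    have hinj : ∀ x ∈ S, ∀ y ∈ S, insert v x = insert v y → x = y := by
      intro x hx y hy h
      have h' := congrArg (fun s : Finset V => s.erase v) h
      simpa [Finset.erase_insert (hvA x hx), Finset.erase_insert (hvA y hy)] using h'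
    rw [hTeq, Finset.sum_insert hnotmem, Finset.sum_image hinj]
    have hcard : ∀ K' ∈ S, (insert v K').card = K'.card + 1 := fun K' hK' =>
      Finset.card_insert_of_notMem (hvA K' hK')
    have : ∑ K' ∈ S, (-1 : ℤ) ^ ((insert v K').card + 1)
        = - ∑ K' ∈ S, (-1 : ℤ) ^ (K'.card + 1) := by
      rw [← Finset.sum_neg_distrib]
      refine Finset.sum_congr rfl fun K' hK' => ?_
      rw [hcard K' hK']
      ring
    rw [this]
    have hchi : chiInduced G {w | G.Adj v w ∧ f w < f v}
        = ∑ K' ∈ S, (-1 : ℤ) ^ (K'.card + 1) := rfl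
    rw [hchi]
    rw [Finset.card_singleton]; ring
  -- Every nonempty clique has a unique `f`-maximal vertex.
  have huniq : ∀ K ∈ C, ∃! v : V, v ∈ K ∧ ∀ w ∈ K, f w ≤ f v := by
    intro K hK
    simp only [hC, Finset.mem_filter] at hK
    obtain ⟨hne, hcl, -⟩ := hK.2
    obtain ⟨v, hv, hmax⟩ := K.exists_max_image f hne
    refine ⟨v, ⟨hv, hmax⟩, ?_⟩
    rintro u ⟨hu, humax⟩
    by_contra huv
    have hadj : G.Adj u v := hcl (by exact_mod_cast hu) (by exact_mod_cast hv) huv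
    exact hf u v hadj (le_antisymm (hmax u hu) (humax v hv))
  calc ∑ v : V, (1 - chiInduced G {w | G.Adj v w ∧ f w < f v})
      = ∑ v : V, ∑ K ∈ C.filter (fun K => v ∈ K ∧ ∀ w ∈ K, f w ≤ f v),
          (-1 : ℤ) ^ (K.card + 1) := by
        refine Finset.sum_congr rfl fun v _ => (key v).symm
    _ = ∑ v : V, ∑ K ∈ C,
          (if v ∈ K ∧ ∀ w ∈ K, f w ≤ f v then (-1 : ℤ) ^ (K.card + 1) else 0) := by
        refine Finset.sum_congr rfl fun v _ => ?_
        rw [Finset.sum_filter]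
    _ = ∑ K ∈ C, ∑ v : V,
          (if v ∈ K ∧ ∀ w ∈ K, f w ≤ f v then (-1 : ℤ) ^ (K.card + 1) else 0) :=
        Finset.sum_comm
    _ = ∑ K ∈ C, (-1 : ℤ) ^ (K.card + 1) := by
        refine Finset.sum_congr rfl fun K hK => ?_
        obtain ⟨v₀, hv₀, huv₀⟩ := huniq K hK
        have hfilter : Finset.univ.filter (fun v => v ∈ K ∧ ∀ w ∈ K, f w ≤ f v)
            = {v₀} := by
          ext u
          simp only [Finset.mem_filter, Finset.mem_univ, true_and, Finset.mem_singleton]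
          exact ⟨fun h => huv₀ u h, fun h => h ▸ hv₀⟩
        rw [← Finset.sum_filter, hfilter, Finset.sum_singleton]
    _ = chiInduced G Set.univ := rfl
end

section
/- For every finite abstract simplicial complex G, the Euler characteristic is invariant under Barycentric refinement: χ(G₁) = χ(G), where G₁ is the Barycentric refinement of G and the Euler characteristic of G₁ is Σ over nonempty chains C of (−1)^(|C|−1). -/
variable {V : Type*} [DecidableEq V]

open Finset

private lemma chain_max {C : Finset (Finset V)} (hC : C.Nonempty)
    (h : ∀ a ∈ C, ∀ b ∈ C, a ⊆ b ∨ b ⊆ a) : ∃ x ∈ C, ∀ b ∈ C, b ⊆ x := by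
  obtain ⟨x, hxC, hmax⟩ := C.exists_max_image (fun y => y.card) hC
  refine ⟨x, hxC, fun b hb => ?_⟩
  rcases h b hb x hxC with h1 | h1
  · exact h1
  · have hxb := Finset.eq_of_subset_of_card_le h1 (hmax b hb)
    rw [← hxb]

private lemma chain_sup_mem {C : Finset (Finset V)} (hC : C.Nonempty)
    (h : ∀ a ∈ C, ∀ b ∈ C, a ⊆ b ∨ b ⊆ a) :
    C.sup id ∈ C ∧ ∀ b ∈ C, b ⊆ C.sup id := by
  obtain ⟨x, hx, hmax⟩ := chain_max hC h
  have hsup : C.sup id = x :=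
    le_antisymm (Finset.sup_le fun b hb => hmax b hb) (Finset.le_sup (f := id) hx)
  rw [hsup]; exact ⟨hx, hmax⟩

private lemma negone_pow_pred {n : ℕ} (hn : 0 < n) :
    -(-1 : ℤ) ^ n = (-1 : ℤ) ^ (n - 1) := by
  obtain ⟨m, rfl⟩ : ∃ m, n = m + 1 := ⟨n - 1, (Nat.succ_pred_eq_of_pos hn).symm⟩
  simp [pow_succ]

private lemma omega_eq {y : Finset V} (hy : y.Nonempty) :
    omegaSgn y = -(-1 : ℤ) ^ y.card := by
  rw [omegaSgn]
  exact (negone_pow_pred (card_pos.mpr hy)).symm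

/-- Euler characteristic of the boundary complex of a nonempty simplex. -/
private lemma chi_boundary (x : Finset V) (hx : x.Nonempty) :
    chi (x.powerset.filter (fun y => y.Nonempty ∧ y ≠ x)) = 1 - omegaSgn x := by
  have hxall : x ∈ x.powerset.filter (fun y : Finset V => y.Nonempty) := by
    simp [hx]
  have hset : x.powerset.filter (fun y => y.Nonempty ∧ y ≠ x)
      = (x.powerset.filter (fun y : Finset V => y.Nonempty)).erase x := by
    ext y
    simp only [mem_filter, mem_erase, mem_powerset]
    tauto
  have hsum0 : ∑ y ∈ x.powerset, (-1 : ℤ) ^ y.card = 0 :=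
    Finset.sum_powerset_neg_one_pow_card_of_nonempty hx
  have hsplit : x.powerset = insert (∅ : Finset V)
      (x.powerset.filter (fun y : Finset V => y.Nonempty)) := by
    ext y
    simp only [mem_insert, mem_filter, mem_powerset]
    constructor
    · intro hy
      rcases eq_or_ne y ∅ with h | h
      · exact Or.inl h
      · exact Or.inr ⟨hy, nonempty_iff_ne_empty.mpr h⟩
    · rintro (rfl | ⟨hy, _⟩)
      · exact empty_subset x
      · exact hy
  have hnm : (∅ : Finset V) ∉ x.powerset.filter (fun y : Finset V => y.Nonempty) := by
    simp
  rw [hsplit, Finset.sum_insert hnm] at hsum0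
  simp only [card_empty, pow_zero] at hsum0
  have hsum1 : ∑ y ∈ x.powerset.filter (fun y : Finset V => y.Nonempty),
      omegaSgn y = 1 := by
    calc ∑ y ∈ x.powerset.filter (fun y : Finset V => y.Nonempty), omegaSgn y
        = ∑ y ∈ x.powerset.filter (fun y : Finset V => y.Nonempty), -(-1 : ℤ) ^ y.card := by
          refine Finset.sum_congr rfl fun y hy => omega_eq ?_
          exact (mem_filter.mp hy).2
      _ = -∑ y ∈ x.powerset.filter (fun y : Finset V => y.Nonempty), (-1 : ℤ) ^ y.card := by
          rw [Finset.sum_neg_distrib]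
      _ = 1 := by omega
  rw [← Finset.add_sum_erase _ _ hxall] at hsum1
  rw [chi, hset]
  linarith

/-- Key induction: the sum of `(-1)^|C|` over all chains (including the empty chain)
in a simplicial complex `G` equals `1 - χ(G)`. -/
private lemma Nsum_eq : ∀ (G : Finset (Finset V)),
    (∀ x ∈ G, x.Nonempty) → (∀ x ∈ G, ∀ y ⊆ x, y.Nonempty → y ∈ G) →
    (∑ C ∈ G.powerset.filter (fun C => ∀ a ∈ C, ∀ b ∈ C, a ⊆ b ∨ b ⊆ a),
      (-1 : ℤ) ^ C.card) = 1 - chi G := by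
  intro G
  induction G using Finset.strongInduction with
  | _ G ih =>
    intro hne hdown
    classical
    set T := G.powerset.filter (fun C => ∀ a ∈ C, ∀ b ∈ C, a ⊆ b ∨ b ⊆ a) with hT
    have hempT : (∅ : Finset (Finset V)) ∈ T := by
      simp [hT]
    rw [← Finset.add_sum_erase _ _ hempT]
    simp only [card_empty, pow_zero]
    -- fiberwise over the maximum (sup) of each nonempty chain
    have hmaps : ∀ C ∈ T.erase ∅, C.sup id ∈ G := by
      intro C hC
      rw [mem_erase] at hC
      obtain ⟨hCne, hCT⟩ := hC
      rw [hT, mem_filter, mem_powerset] at hCT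
      exact hCT.1 ((chain_sup_mem (nonempty_iff_ne_empty.mpr hCne) hCT.2).1)
    rw [← Finset.sum_fiberwise_of_maps_to hmaps (fun C => (-1 : ℤ) ^ C.card)]
    -- compute each fiber
    have hfiber : ∀ x ∈ G, (∑ C ∈ (T.erase ∅).filter (fun C => C.sup id = x),
        (-1 : ℤ) ^ C.card) = -omegaSgn x := by
      intro x hxG
      set Glt := G.filter (fun y => y ⊆ x ∧ y ≠ x) with hGlt
      have hGltss : Glt ⊂ G := by
        refine Finset.ssubset_iff_of_subset (filter_subset _ _) |>.mpr ?_
        exact ⟨x, hxG, by simp [hGlt]⟩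
      -- bijection: C ↦ C.erase x
      have hbij : (∑ C ∈ (T.erase ∅).filter (fun C => C.sup id = x), (-1 : ℤ) ^ C.card)
          = ∑ D ∈ Glt.powerset.filter (fun D => ∀ a ∈ D, ∀ b ∈ D, a ⊆ b ∨ b ⊆ a),
              -(-1 : ℤ) ^ D.card := by
        refine Finset.sum_nbij' (fun C => C.erase x) (fun D => insert x D) ?_ ?_ ?_ ?_ ?_
        · intro C hC
          rw [mem_filter, mem_erase, hT, mem_filter, mem_powerset] at hC
          obtain ⟨⟨hCne, hCG, hCch⟩, hCsup⟩ := hC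
          have hCne' : C.Nonempty := nonempty_iff_ne_empty.mpr hCne
          obtain ⟨hsupmem, hsuple⟩ := chain_sup_mem hCne' hCch
          rw [hCsup] at hsupmem hsuple
          rw [mem_filter, mem_powerset]
          constructor
          · intro y hy
            rw [mem_erase] at hy
            rw [hGlt, mem_filter]
            exact ⟨hCG hy.2, hsuple y hy.2, hy.1⟩
          · intro a ha b hb
            rw [mem_erase] at ha hb
            exact hCch a ha.2 b hb.2
        · intro D hD
          rw [mem_filter, mem_powerset] at hD
          obtain ⟨hDG, hDch⟩ := hD
          have hxnotD : x ∉ D := fun h => by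
            have := hDG h; rw [hGlt, mem_filter] at this; exact this.2.2 rfl
          have hDsub : ∀ y ∈ D, y ⊆ x := by
            intro y hy
            have := hDG hy; rw [hGlt, mem_filter] at this; exact this.2.1
          rw [mem_filter, mem_erase, hT, mem_filter, mem_powerset]
          refine ⟨⟨?_, ?_, ?_⟩, ?_⟩
          · exact Finset.insert_ne_empty x D
          · intro y hy
            rcases mem_insert.mp hy with h | h
            · exact h ▸ hxG
            · exact (filter_subset _ _) (hDG h)
          · intro a ha b hb
            rcases mem_insert.mp ha with h1 | h1 <;> rcases mem_insert.mp hb with h2 | h2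
            · left; rw [h1, h2]
            · right; rw [h1]; exact hDsub b h2
            · left; rw [h2]; exact hDsub a h1
            · exact hDch a h1 b h2
          · show (insert x D).sup id = x
            refine le_antisymm (Finset.sup_le ?_) (Finset.le_sup (f := id) (mem_insert_self x D))
            intro y hy
            rcases mem_insert.mp hy with h | h
            · exact h ▸ subset_rfl
            · exact hDsub y h
        · intro C hC
          rw [mem_filter, mem_erase, hT, mem_filter, mem_powerset] at hC
          obtain ⟨⟨hCne, hCG, hCch⟩, hCsup⟩ := hC
          have hCne' : C.Nonempty := nonempty_iff_ne_empty.mpr hCne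
          have hxC : x ∈ C := by
            have := (chain_sup_mem hCne' hCch).1; rwa [hCsup] at this
          exact Finset.insert_erase hxC
        · intro D hD
          rw [mem_filter, mem_powerset] at hD
          have hxnotD : x ∉ D := fun h => by
            have := hD.1 h; rw [hGlt, mem_filter] at this; exact this.2.2 rfl
          exact Finset.erase_insert hxnotD
        · intro C hC
          rw [mem_filter, mem_erase, hT, mem_filter, mem_powerset] at hC
          obtain ⟨⟨hCne, hCG, hCch⟩, hCsup⟩ := hC
          have hCne' : C.Nonempty := nonempty_iff_ne_empty.mpr hCne
          have hxC : x ∈ C := by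
            have := (chain_sup_mem hCne' hCch).1; rwa [hCsup] at this
          show ((-1 : ℤ)) ^ C.card = -(-1 : ℤ) ^ (C.erase x).card
          rw [Finset.card_erase_of_mem hxC, ← negone_pow_pred (card_pos.mpr hCne'), neg_neg]
      rw [hbij]
      have hGltne : ∀ y ∈ Glt, y.Nonempty := fun y hy => hne y ((filter_subset _ _) hy)
      have hGltdown : ∀ y ∈ Glt, ∀ z ⊆ y, z.Nonempty → z ∈ Glt := by
        intro y hy z hzy hzne
        rw [hGlt, mem_filter] at hy ⊢
        refine ⟨hdown y hy.1 z hzy hzne, hzy.trans hy.2.1, fun h => ?_⟩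
        exact hy.2.2 (Finset.Subset.antisymm hy.2.1 (h ▸ hzy))
      have hIH := ih Glt hGltss hGltne hGltdown
      have hGlt_eq : Glt = x.powerset.filter (fun y => y.Nonempty ∧ y ≠ x) := by
        ext y
        rw [hGlt, mem_filter, mem_filter, mem_powerset]
        constructor
        · rintro ⟨hyG, hyx, hyne⟩
          exact ⟨hyx, hne y hyG, hyne⟩
        · rintro ⟨hyx, hyne, hynex⟩
          exact ⟨hdown x hxG y hyx hyne, hyx, hynex⟩
      have hchiGlt : chi Glt = 1 - omegaSgn x := by
        rw [hGlt_eq]; exact chi_boundary x (hne x hxG)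
      rw [Finset.sum_neg_distrib, hIH, hchiGlt]
      ring
    rw [Finset.sum_congr rfl hfiber, chi]
    rw [Finset.sum_neg_distrib]
    ring

/-- Invariance of the Euler characteristic under Barycentric refinement:
the sum of `(-1)^(|C|-1)` over all nonempty chains `C` of simplices of `G`
(the simplices of the Barycentric refinement `G₁`) equals `χ(G)`. -/
theorem stmt17 (G : Finset (Finset V))
    (hne : ∀ x ∈ G, x.Nonempty)
    (hdown : ∀ x ∈ G, ∀ y ⊆ x, y.Nonempty → y ∈ G) :
    (∑ C ∈ G.powerset.filter
        (fun C => C.Nonempty ∧ ∀ a ∈ C, ∀ b ∈ C, a ⊆ b ∨ b ⊆ a),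
      (-1 : ℤ) ^ (C.card - 1)) = chi G := by
  classical
  have hkey := Nsum_eq G hne hdown
  set T := G.powerset.filter (fun C => ∀ a ∈ C, ∀ b ∈ C, a ⊆ b ∨ b ⊆ a) with hT
  have hempT : (∅ : Finset (Finset V)) ∈ T := by simp [hT]
  have hset : G.powerset.filter (fun C => C.Nonempty ∧ ∀ a ∈ C, ∀ b ∈ C, a ⊆ b ∨ b ⊆ a)
      = T.erase ∅ := by
    ext C
    rw [mem_filter, mem_erase, hT, mem_filter, nonempty_iff_ne_empty]
    tauto
  have hsign : ∀ C ∈ T.erase ∅, (-1 : ℤ) ^ (C.card - 1) = -(-1 : ℤ) ^ C.card := by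
    intro C hC
    have hCne : C.Nonempty := nonempty_iff_ne_empty.mpr (mem_erase.mp hC).1
    exact (negone_pow_pred (card_pos.mpr hCne)).symm
  rw [hset, Finset.sum_congr rfl hsign, Finset.sum_neg_distrib]
  rw [← Finset.add_sum_erase _ _ hempT] at hkey
  simp only [Finset.card_empty, pow_zero] at hkey
  linarith
end

section
/- Let G be a finite abstract simplicial complex on a finite vertex type V, and for each vertex v define the curvature κ(v) = Σ over simplices x ∈ G with v ∈ x of (−1)^(|x|−1)/|x|, a rational number. Then the Gauss–Bonnet theorem holds: Σ_{v ∈ V} κ(v) = χ(G) (as rational numbers), where the sum is over all vertices v that belong to some simplex of G. -/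
variable {V : Type*} [DecidableEq V] [Fintype V]

/-- The curvature of a vertex `v` in the complex `G`:
`κ(v) = ∑_{x ∈ G, v ∈ x} (-1)^(|x|-1) / |x|`. -/
def curvature (G : Finset (Finset V)) (v : V) : ℚ :=
  ∑ x ∈ G.filter (fun x => v ∈ x), (-1 : ℚ) ^ (x.card - 1) / (x.card : ℚ)

/-- Gauss–Bonnet: the total curvature over all vertices belonging to some
simplex of `G` equals the Euler characteristic of `G`. -/
theorem stmt18 (G : Finset (Finset V))
    (hne : ∀ x ∈ G, x.Nonempty)
    (hdown : ∀ x ∈ G, ∀ y ⊆ x, y.Nonempty → y ∈ G) :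
    ∑ v ∈ Finset.univ.filter (fun v : V => ∃ x ∈ G, v ∈ x), curvature G v
      = (chi G : ℚ) := by
  have key : ∀ v : V,
      (if (∃ x ∈ G, v ∈ x) then curvature G v else 0)
        = ∑ x ∈ G, if v ∈ x then (-1 : ℚ) ^ (x.card - 1) / (x.card : ℚ) else 0 := by
    intro v
    by_cases h : ∃ x ∈ G, v ∈ x
    · simp [h, curvature, Finset.sum_filter]
    · push_neg at h
      rw [if_neg (by push_neg; exact h)]
      exact (Finset.sum_eq_zero (fun x hx => by simp [h x hx])).symm
  calc ∑ v ∈ Finset.univ.filter (fun v : V => ∃ x ∈ G, v ∈ x), curvature G v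
      = ∑ v : V, if (∃ x ∈ G, v ∈ x) then curvature G v else 0 := by
        rw [Finset.sum_filter]
    _ = ∑ v : V, ∑ x ∈ G, if v ∈ x then (-1 : ℚ) ^ (x.card - 1) / (x.card : ℚ) else 0 := by
        exact Finset.sum_congr rfl fun v _ => key v
    _ = ∑ x ∈ G, ∑ v : V, if v ∈ x then (-1 : ℚ) ^ (x.card - 1) / (x.card : ℚ) else 0 :=
        Finset.sum_comm
    _ = ∑ x ∈ G, (x.card : ℚ) * ((-1 : ℚ) ^ (x.card - 1) / (x.card : ℚ)) := by
        refine Finset.sum_congr rfl fun x _ => ?_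
        rw [← Finset.sum_filter]
        simp [Finset.filter_mem_eq_inter, Finset.sum_const, mul_comm]
    _ = (chi G : ℚ) := by
        unfold chi omegaSgn
        push_cast
        refine Finset.sum_congr rfl fun x hx => ?_
        have hc : (x.card : ℚ) ≠ 0 := by
          have := (hne x hx).card_pos; positivity
        field_simp
end

section
/- For every natural number n ≥ 3, the number of open sets of the star topology on the cycle complex C_n equals the Lucas number L(2n) = fib(2n−1) + fib(2n+1); equivalently, the number of subsets A of C_n that are up-sets (x ∈ A, y ∈ C_n, x ⊆ y implies y ∈ A) is fib(2n−1) + fib(2n+1), where fib is the Fibonacci sequence. -/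
/-! An up-set of `C_n` consists of a set `E` of edges together with a set of vertices each of
whose two incident edges lie in `E`. Writing `e : ZMod n → Bool` for the indicator of `E`, there
are `∑ₑ ∏ᵢ 2 ^ [e i ∧ e (i + 1)]` of them: the trace of the `n`-th power of the transfer matrix
`!![1, 1; 1, 2]`. That matrix is the square of the Fibonacci matrix `Q = !![0, 1; 1, 1]`, so the
count is `trace (Q ^ 2n) = fib (2n - 1) + fib (2n + 1)`. -/

/-- The cycle complex `C_n` on `ZMod n`: simplices are the singletons `{i}`
and the edges `{i, i+1}`. -/
def cycleComplex (n : ℕ) [NeZero n] : Finset (Finset (ZMod n)) :=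
  (Finset.univ.image fun i : ZMod n => ({i} : Finset (ZMod n))) ∪
    (Finset.univ.image fun i : ZMod n => ({i, i + 1} : Finset (ZMod n)))

open Finset Function

namespace Finset

theorem card_filter_powerset_image {α β : Type*} [Fintype α] [DecidableEq α] [DecidableEq β]
    {f : α → β} (hf : Injective f) (P : Finset β → Prop) [DecidablePred P] :
    #{A ∈ (univ.image f).powerset | P A} = #{p : α → Bool | P (image f {a | p a})} := by
  have image_preimage {A : Finset β} (hA : A ⊆ univ.image f) : image f {a | f a ∈ A} = A := by
    ext y
    refine ⟨fun hy => ?_, fun hy => ?_⟩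
    · obtain ⟨a, ha, rfl⟩ := mem_image.mp hy
      exact (mem_filter.mp ha).2
    · obtain ⟨a, -, rfl⟩ := mem_image.mp (hA hy)
      exact mem_image_of_mem f (mem_filter.mpr ⟨mem_univ a, hy⟩)
  have preimage_image (p : α → Bool) : (fun a => decide (f a ∈ image f {a | p a})) = p := by
    ext a
    simp [hf.eq_iff]
  refine card_nbij' (fun A a => decide (f a ∈ A)) (fun p => image f {a | p a}) ?_ ?_ ?_ ?_
  · intro A hA
    simp only [coe_filter, mem_powerset, Set.mem_ofPred_eq, decide_eq_true_eq, mem_univ,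
      true_and] at hA ⊢
    rw [image_preimage hA.1]
    exact hA.2
  · intro p hp
    simp only [coe_filter, mem_powerset, Set.mem_ofPred_eq, mem_univ, true_and] at hp ⊢
    exact ⟨image_subset_image (subset_univ _), hp⟩
  · intro A hA
    simpa using image_preimage (mem_powerset.mp (mem_filter.mp hA).1)
  · intro p _
    exact preimage_image p

theorem card_filter_forall_imp {ι : Type*} [Fintype ι] [DecidableEq ι]
    (P : (ι → Bool) → ι → Prop) [∀ e i, Decidable (P e i)] :
    #{q : (ι → Bool) × (ι → Bool) | ∀ i, q.1 i → P q.2 i} =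
      ∑ e, ∏ i, if P e i then 2 else 1 := by
  have card_bool (Q : Prop) [Decidable Q] : #{b : Bool | b → Q} = if Q then 2 else 1 := by
    by_cases hQ : Q <;> simp [hQ, filter_eq']
  rw [card_filter, Fintype.sum_prod_type_right]
  refine sum_congr rfl fun e _ => ?_
  rw [← card_filter]
  calc #{s : ι → Bool | ∀ i, s i → P e i}
      = #(Fintype.piFinset fun i => {b : Bool | b → P e i}) := by
        congr 1
        ext s
        simp
    _ = ∏ i, if P e i then 2 else 1 := by
        simp only [Fintype.card_piFinset, card_bool]

end Finset

namespace Matrix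

variable {ι R : Type*} [CommSemiring R] [Fintype ι] [DecidableEq ι]

theorem pow_succ_apply_eq_sum_prod (M : Matrix ι ι R) (k : ℕ) (a b : ι) :
    (M ^ (k + 1)) a b =
      ∑ p : Fin k → ι, ∏ i : Fin (k + 1),
        M ((Fin.cons a p : Fin (k + 1) → ι) i) ((Fin.snoc p b : Fin (k + 1) → ι) i) := by
  induction k generalizing a with
  | zero => simp [Fin.snoc]
  | succ k ih =>
    rw [pow_succ', mul_apply, ← (Fin.consEquiv fun _ => ι).sum_comp, Fintype.sum_prod_type]
    refine sum_congr rfl fun c _ => ?_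
    simp only [Fin.consEquiv, Equiv.coe_fn_mk, ← Fin.cons_snoc_eq_snoc_cons]
    simp only [Fin.prod_univ_succ (n := k + 1), Fin.cons_zero, Fin.cons_succ, ih, mul_sum]

theorem trace_pow_succ_eq_sum_prod (M : Matrix ι ι R) (m : ℕ) :
    trace (M ^ (m + 1)) = ∑ e : Fin (m + 1) → ι, ∏ i, M (e i) (e (i + 1)) := by
  have cons_add_one (a : ι) (p : Fin m → ι) (i : Fin (m + 1)) :
      (Fin.cons a p : Fin (m + 1) → ι) (i + 1) = (Fin.snoc p a : Fin (m + 1) → ι) i := by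
    induction i using Fin.lastCases with
    | last => simp
    | cast j => simp [Fin.coeSucc_eq_succ]
  rw [← (Fin.consEquiv fun _ => ι).sum_comp, Fintype.sum_prod_type, trace]
  refine sum_congr rfl fun a _ => ?_
  simp only [diag_apply, pow_succ_apply_eq_sum_prod, Fin.consEquiv, Equiv.coe_fn_mk,
    cons_add_one]

end Matrix

-- The Fibonacci matrix `!![0, 1; 1, 1]`, with rows and columns indexed by `false, true`.
def fibMatrix : Matrix Bool Bool ℕ := Matrix.of fun a b => if a || b then 1 else 0

theorem fibMatrix_pow_succ_apply (k : ℕ) (a b : Bool) :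
    (fibMatrix ^ (k + 1)) a b = Nat.fib (k + a.toNat + b.toNat) := by
  induction k generalizing b with
  | zero => cases a <;> cases b <;> rfl
  | succ k ih =>
    rw [pow_succ, Matrix.mul_apply, Fintype.sum_bool, ih, ih, Nat.add_right_comm k 1]
    cases b
    · simp [fibMatrix]
    · simp [fibMatrix, Nat.fib_add_two]
      omega

theorem trace_fibMatrix_pow_succ (k : ℕ) :
    Matrix.trace (fibMatrix ^ (k + 1)) = Nat.fib k + Nat.fib (k + 2) := by
  simp only [Matrix.trace, Matrix.diag_apply, Fintype.sum_bool, fibMatrix_pow_succ_apply,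
    Bool.toNat_true, Bool.toNat_false, add_zero]
  rw [add_comm]

theorem fibMatrix_sq_apply (a b : Bool) : (fibMatrix ^ 2) a b = if a ∧ b then 2 else 1 := by
  cases a <;> cases b <;> rfl

theorem ZMod.natCast_ne_zero_of_lt {n k : ℕ} (hk : 0 < k) (hkn : k < n) : (k : ZMod n) ≠ 0 := by
  rw [Ne, ZMod.natCast_eq_zero_iff]
  exact fun h => absurd (Nat.le_of_dvd hk h) (by omega)

section Cells

variable {n : ℕ}

def cycleCell (n : ℕ) : ZMod n ⊕ ZMod n → Finset (ZMod n) :=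
  Sum.elim (fun i => {i}) (fun i => {i, i + 1})

theorem cycleCell_subset_cycleCell_iff (hn : 3 ≤ n) (c d : ZMod n ⊕ ZMod n) :
    cycleCell n c ⊆ cycleCell n d ↔
      c = d ∨ ∃ i, c = .inl i ∧ (d = .inr i ∨ d = .inr (i - 1)) := by
  have add_one_ne (i : ZMod n) : i + 1 ≠ i := by
    simpa using ZMod.natCast_ne_zero_of_lt (n := n) one_pos (by omega)
  have add_one_add_one_ne (i : ZMod n) : i + 1 + 1 ≠ i := by
    simpa [add_assoc, one_add_one_eq_two] using
      ZMod.natCast_ne_zero_of_lt (n := n) two_pos (by omega)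
  rcases c with i | i <;> rcases d with j | j <;>
    simp only [cycleCell, Sum.elim_inl, Sum.elim_inr, insert_subset_iff, singleton_subset_iff,
      mem_insert, mem_singleton, Sum.inl.injEq, Sum.inr.injEq, reduceCtorEq, eq_sub_iff_add_eq] <;>
    grind

theorem cycleComplex_eq_image_cycleCell [NeZero n] :
    cycleComplex n = univ.image (cycleCell n) := by
  ext y
  simp [cycleComplex, cycleCell, Sum.exists]

theorem cycleCell_injective (hn : 3 ≤ n) : Injective (cycleCell n) := by
  intro c d h
  have hcd := (cycleCell_subset_cycleCell_iff hn c d).mp h.le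
  have hdc := (cycleCell_subset_cycleCell_iff hn d c).mp h.ge
  grind

theorem card_upperSets_cycleComplex (hn : 3 ≤ n) [NeZero n] :
    #{A ∈ (cycleComplex n).powerset | ∀ x ∈ A, ∀ y ∈ cycleComplex n, x ⊆ y → y ∈ A} =
      ∑ e : ZMod n → Bool, ∏ i, if e i ∧ e (i + 1) then 2 else 1 := by
  rw [cycleComplex_eq_image_cycleCell, card_filter_powerset_image (cycleCell_injective hn)]
  have upClosed_iff (p : ZMod n ⊕ ZMod n → Bool) :
      (∀ x ∈ image (cycleCell n) {c | p c}, ∀ y ∈ univ.image (cycleCell n),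
          x ⊆ y → y ∈ image (cycleCell n) {c | p c}) ↔
        ∀ i, p (.inl i) → p (.inr i) ∧ p (.inr (i - 1)) := by
    simp only [forall_mem_image, (cycleCell_injective hn).mem_finset_image, mem_filter, mem_univ,
      true_and, cycleCell_subset_cycleCell_iff hn]
    grind
  have split : #{p : ZMod n ⊕ ZMod n → Bool | ∀ i, p (.inl i) → p (.inr i) ∧ p (.inr (i - 1))} =
      #{q : (ZMod n → Bool) × (ZMod n → Bool) | ∀ i, q.1 i → q.2 i ∧ q.2 (i - 1)} :=
    card_equiv (Equiv.sumArrowEquivProdArrow _ _ _) (by simp)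
  rw [filter_congr fun p _ => upClosed_iff p, split,
    card_filter_forall_imp fun e i => e i ∧ e (i - 1)]
  refine sum_congr rfl fun e _ => ?_
  rw [← Equiv.prod_comp (Equiv.addRight 1)]
  simp [and_comm]

end Cells

/-- For `n ≥ 3`, the number of open sets of the star topology on the cycle
complex `C_n` — i.e. the number of up-sets of `C_n` — is the Lucas number
`L(2n) = fib(2n-1) + fib(2n+1)`. -/
theorem stmt19 (n : ℕ) (hn : 3 ≤ n) :
    haveI : NeZero n := ⟨by omega⟩
    ((cycleComplex n).powerset.filter
        (fun A => ∀ x ∈ A, ∀ y ∈ cycleComplex n, x ⊆ y → y ∈ A)).card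
      = Nat.fib (2 * n - 1) + Nat.fib (2 * n + 1) := by
  obtain ⟨m, rfl⟩ : ∃ m, n = m + 1 := ⟨n - 1, by omega⟩
  calc _ = ∑ e : ZMod (m + 1) → Bool, ∏ i, (fibMatrix ^ 2) (e i) (e (i + 1)) := by
        simp only [card_upperSets_cycleComplex hn, fibMatrix_sq_apply]
    _ = Matrix.trace (fibMatrix ^ (2 * m + 1 + 1)) := by
        rw [show 2 * m + 1 + 1 = 2 * (m + 1) by ring, pow_mul]
        -- `ZMod (m + 1)` is `Fin (m + 1)` by definition
        exact (Matrix.trace_pow_succ_eq_sum_prod _ m).symm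
    _ = _ := by
        rw [trace_fibMatrix_pow_succ, show 2 * (m + 1) - 1 = 2 * m + 1 by omega,
          show 2 * (m + 1) + 1 = 2 * m + 1 + 2 by ring]
end
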